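/- arXiv:2504.17916 — 9 statements merged into one kernel-verified Lean document; each statement's English description precedes it below -/
import Mathlib

section
/- For every nonempty finite lattice L, there exists a matching market instance I = (F, W, (C_f)_{f∈F}, (C_w)_{w∈W}) in which every choice function is substitutable and consistent, together with a bijection θ from L onto the set S of stable matchings of I, such that for all x, y ∈ L: x ≤ y in L if and only if C_f(θ(y)(f) ∪ θ(x)(f)) = θ(y)(f) for every firm f ∈ F. In other words, every finite lattice is order-isomorphic to the stable matching lattice (S, ⪰) of some matching market with substitutable and consistent choice functions. -/
open Finset

/-- A choice function is substitutable if `a ∈ C S` implies `a ∈ C (T ∪ {a})`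
for every `T ⊆ S`. -/
def Substitutable {α : Type*} [DecidableEq α] (C : Finset α → Finset α) : Prop :=
  ∀ (S T : Finset α) (a : α), T ⊆ S → a ∈ C S → a ∈ C (insert a T)

/-- A choice function is consistent if `C S ⊆ T ⊆ S` implies `C T = C S`. -/
def Consistent {α : Type*} (C : Finset α → Finset α) : Prop :=
  ∀ (S T : Finset α), C S ⊆ T → T ⊆ S → C T = C S

/-- The set of workers matched to firm `f` in the matching `μ`. -/
def matchedW {F W : Type*} [DecidableEq F] [DecidableEq W]
    (μ : Finset (F × W)) (f : F) : Finset W :=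
  (μ.filter fun p => p.1 = f).image Prod.snd

/-- The set of firms matched to worker `w` in the matching `μ`. -/
def matchedF {F W : Type*} [DecidableEq F] [DecidableEq W]
    (μ : Finset (F × W)) (w : W) : Finset F :=
  (μ.filter fun p => p.2 = w).image Prod.fst

/-- A matching is stable if it is individually rational and has no blocking pair. -/
def IsStable {F W : Type*} [DecidableEq F] [DecidableEq W]
    (Cf : F → Finset W → Finset W) (Cw : W → Finset F → Finset F)
    (μ : Finset (F × W)) : Prop :=
  (∀ f, Cf f (matchedW μ f) = matchedW μ f) ∧
  (∀ w, Cw w (matchedF μ w) = matchedF μ w) ∧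
  (∀ f w, (f, w) ∉ μ →
    ¬ (f ∈ Cw w (insert f (matchedF μ w)) ∧ w ∈ Cf f (insert w (matchedW μ f))))

/-- The firm (partial) order on matchings: `μ ⪰ μ'` iff
`C_f(μ(f) ∪ μ'(f)) = μ(f)` for every firm `f`. -/
def FirmGE {F W : Type*} [DecidableEq F] [DecidableEq W]
    (Cf : F → Finset W → Finset W) (μ μ' : Finset (F × W)) : Prop :=
  ∀ f, Cf f (matchedW μ f ∪ matchedW μ' f) = matchedW μ f

/-- A matching market instance: finite disjoint sets of firms and workers together
with choice functions satisfying `C_a(S) ⊆ S`. -/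
structure MatchingMarket where
  F : Type
  W : Type
  [decF : DecidableEq F]
  [decW : DecidableEq W]
  [finF : Fintype F]
  [finW : Fintype W]
  Cf : F → Finset W → Finset W
  Cw : W → Finset F → Finset F
  Cf_subset : ∀ f S, Cf f S ⊆ S
  Cw_subset : ∀ w S, Cw w S ⊆ S

attribute [instance] MatchingMarket.decF MatchingMarket.decW
  MatchingMarket.finF MatchingMarket.finW

set_option linter.unusedSectionVars false
set_option linter.unusedVariables false
set_option maxHeartbeats 1000000
set_option linter.unreachableTactic false
set_option linter.unusedTactic false

namespace SMC

/-! ### Generic helpers -/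

lemma mem_matchedW {F W : Type*} [DecidableEq F] [DecidableEq W]
    {μ : Finset (F × W)} {f : F} {w : W} : w ∈ matchedW μ f ↔ (f, w) ∈ μ := by
  constructor
  · intro h
    simp only [matchedW, mem_image, mem_filter] at h
    obtain ⟨⟨a, b⟩, ⟨hm, h1⟩, h2⟩ := h
    simp only at h1 h2
    subst h1; subst h2; exact hm
  · intro h
    simp only [matchedW, mem_image, mem_filter]
    exact ⟨(f, w), ⟨h, rfl⟩, rfl⟩

lemma mem_matchedF {F W : Type*} [DecidableEq F] [DecidableEq W]
    {μ : Finset (F × W)} {f : F} {w : W} : f ∈ matchedF μ w ↔ (f, w) ∈ μ := by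
  constructor
  · intro h
    simp only [matchedF, mem_image, mem_filter] at h
    obtain ⟨⟨a, b⟩, ⟨hm, h1⟩, h2⟩ := h
    simp only at h1 h2
    subst h1; subst h2; exact hm
  · intro h
    simp only [matchedF, mem_image, mem_filter]
    exact ⟨(f, w), ⟨h, rfl⟩, rfl⟩

section ChooseIf
variable {β : Type*} [DecidableEq β]

/-- Choice: if `p` is available take just `p`, otherwise take everything in `K`. -/
def chooseIf (p : β) (K : Finset β) (S : Finset β) : Finset β :=
  if p ∈ S then {p} else S ∩ K

lemma chooseIf_pos {p : β} {K S : Finset β} (h : p ∈ S) : chooseIf p K S = {p} := if_pos h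

lemma chooseIf_neg {p : β} {K S : Finset β} (h : p ∉ S) : chooseIf p K S = S ∩ K := if_neg h

lemma chooseIf_subset (p : β) (K S : Finset β) : chooseIf p K S ⊆ S := by
  unfold chooseIf; split
  · next h => simpa [singleton_subset_iff]
  · exact inter_subset_left

lemma mem_chooseIf_cases {p : β} {K S : Finset β} {w : β}
    (h : w ∈ chooseIf p K S) : w = p ∨ w ∈ K := by
  unfold chooseIf at h; split at h
  · left; simpa using h
  · right; exact (mem_inter.mp h).2

lemma chooseIf_subs (p : β) (K : Finset β) : Substitutable (chooseIf p K) := by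
  intro S T a hTS ha
  by_cases hp : p ∈ S
  · rw [chooseIf_pos hp] at ha
    have hap : a = p := by simpa using ha
    subst hap
    rw [chooseIf_pos (mem_insert_self _ _)]; simp
  · rw [chooseIf_neg hp] at ha
    obtain ⟨haS, haK⟩ := mem_inter.mp ha
    have hap : p ≠ a := fun h => hp (h ▸ haS)
    have hpT : p ∉ insert a T := by
      simp only [mem_insert]
      rintro (h | h)
      · exact hap h
      · exact hp (hTS h)
    rw [chooseIf_neg hpT]
    exact mem_inter.mpr ⟨mem_insert_self _ _, haK⟩

lemma chooseIf_cons (p : β) (K : Finset β) : Consistent (chooseIf p K) := by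
  intro S T h1 h2
  by_cases hp : p ∈ S
  · rw [chooseIf_pos hp] at h1
    rw [chooseIf_pos hp, chooseIf_pos (h1 (mem_singleton_self p))]
  · have hpT : p ∉ T := fun h => hp (h2 h)
    rw [chooseIf_neg hp] at h1
    rw [chooseIf_neg hpT, chooseIf_neg hp]
    apply subset_antisymm
    · exact inter_subset_inter h2 Subset.rfl
    · intro x hx
      exact mem_inter.mpr ⟨h1 hx, (mem_inter.mp hx).2⟩

lemma chooseIf_fixed {p : β} {K S : Finset β} (h : chooseIf p K S = S) :
    (p ∈ S ∧ S = {p}) ∨ (p ∉ S ∧ S ⊆ K) := by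
  by_cases hp : p ∈ S
  · left
    refine ⟨hp, ?_⟩
    rw [chooseIf_pos hp] at h; exact h.symm
  · right
    refine ⟨hp, ?_⟩
    rw [chooseIf_neg hp] at h
    intro x hx
    rw [← h] at hx
    exact (mem_inter.mp hx).2

end ChooseIf

end SMC

namespace SMC

noncomputable section Construction

open scoped Classical

variable (M : Type) [Lattice M] [Fintype M] [DecidableEq M] [Nonempty M]

abbrev Firm := Option (M ⊕ (M ⊕ M))
abbrev Work := M ⊕ (M ⊕ M)

variable {M}

/-- The hub firm. -/
def hF : Firm M := none
/-- The real (lattice) firm `f`. -/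
def rF (f : M) : Firm M := some (Sum.inl f)
/-- The capture firm for lattice worker `z`. -/
def cF (z : M) : Firm M := some (Sum.inr (Sum.inl z))
/-- The auxiliary gadget firm. -/
def gF (z : M) : Firm M := some (Sum.inr (Sum.inr z))
/-- The lattice worker `z`. -/
def wL (z : M) : Work M := Sum.inl z
/-- The auxiliary gadget worker `u_z`. -/
def wU (z : M) : Work M := Sum.inr (Sum.inl z)
/-- The token worker `t_z`. -/
def wT (z : M) : Work M := Sum.inr (Sum.inr z)

@[simp] lemma rF_inj {a b : M} : (rF a = rF b) ↔ a = b := by simp [rF]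
@[simp] lemma cF_inj {a b : M} : (cF a = cF b) ↔ a = b := by simp [cF]
@[simp] lemma gF_inj {a b : M} : (gF a = gF b) ↔ a = b := by simp [gF]
@[simp] lemma wL_inj {a b : M} : (wL a = wL b) ↔ a = b := by simp [wL]
@[simp] lemma wU_inj {a b : M} : (wU a = wU b) ↔ a = b := by simp [wU]
@[simp] lemma wT_inj {a b : M} : (wT a = wT b) ↔ a = b := by simp [wT]
@[simp] lemma hF_ne_rF {a : M} : (hF : Firm M) ≠ rF a := by simp [hF, rF]
@[simp] lemma hF_ne_cF {a : M} : (hF : Firm M) ≠ cF a := by simp [hF, cF]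
@[simp] lemma hF_ne_gF {a : M} : (hF : Firm M) ≠ gF a := by simp [hF, gF]
@[simp] lemma rF_ne_hF {a : M} : rF a ≠ (hF : Firm M) := by simp [hF, rF]
@[simp] lemma cF_ne_hF {a : M} : cF a ≠ (hF : Firm M) := by simp [hF, cF]
@[simp] lemma gF_ne_hF {a : M} : gF a ≠ (hF : Firm M) := by simp [hF, gF]
@[simp] lemma rF_ne_cF {a b : M} : rF a ≠ cF b := by simp [rF, cF]
@[simp] lemma rF_ne_gF {a b : M} : rF a ≠ gF b := by simp [rF, gF]
@[simp] lemma cF_ne_rF {a b : M} : cF a ≠ rF b := by simp [rF, cF]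
@[simp] lemma gF_ne_rF {a b : M} : gF a ≠ rF b := by simp [rF, gF]
@[simp] lemma cF_ne_gF {a b : M} : cF a ≠ gF b := by simp [cF, gF]
@[simp] lemma gF_ne_cF {a b : M} : gF a ≠ cF b := by simp [cF, gF]
@[simp] lemma wL_ne_wU {a b : M} : wL a ≠ wU b := by simp [wL, wU]
@[simp] lemma wL_ne_wT {a b : M} : wL a ≠ wT b := by simp [wL, wT]
@[simp] lemma wU_ne_wL {a b : M} : wU a ≠ wL b := by simp [wL, wU]
@[simp] lemma wT_ne_wL {a b : M} : wT a ≠ wL b := by simp [wL, wT]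
@[simp] lemma wU_ne_wT {a b : M} : wU a ≠ wT b := by simp [wU, wT]
@[simp] lemma wT_ne_wU {a b : M} : wT a ≠ wU b := by simp [wU, wT]

variable (M)

/-- The bottom element of the finite lattice. -/
def botM : M := (univ : Finset M).inf' univ_nonempty id

lemma botM_le (z : M) : botM M ≤ z := inf'_le _ (mem_univ z)

variable {M}

/-- Join of a finite set of lattice elements (bottom for the empty set). -/
def jn (A : Finset M) : M := (insert (botM M) A).sup' (insert_nonempty _ _) id

lemma le_jn {A : Finset M} {z : M} (h : z ∈ A) : z ≤ jn A :=
  le_sup' (id : M → M) (mem_insert_of_mem h)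

lemma jn_le {A : Finset M} {m : M} (h : ∀ a ∈ A, a ≤ m) : jn A ≤ m := by
  apply sup'_le
  intro b hb
  rcases mem_insert.mp hb with hb | hb
  · subst hb; exact botM_le M m
  · exact h b hb

lemma jn_mono {A B : Finset M} (h : A ⊆ B) : jn A ≤ jn B :=
  jn_le fun a ha => le_jn (h ha)

lemma jn_Icc (x : M) : jn (univ.filter (· ≤ x)) = x := by
  apply le_antisymm
  · exact jn_le fun a ha => (mem_filter.mp ha).2
  · exact le_jn (by simp)

/-- Priority key used by the real firms: strictly monotone and injective. -/
def kx (z : M) : ℕ :=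
  (univ.filter (· ≤ z)).card * (Fintype.card M + 1) + (Fintype.equivFin M z).val

lemma karith {a b r r' N : ℕ} (hab : a < b) (hr : r < N) : a * N + r < b * N + r' :=
  calc a * N + r < a * N + N := by omega
    _ = (a + 1) * N := by ring
    _ ≤ b * N := Nat.mul_le_mul_right _ (by omega)
    _ ≤ b * N + r' := Nat.le_add_right _ _

lemma dcard_lt {x y : M} (h : x < y) :
    (univ.filter (· ≤ x)).card < (univ.filter (· ≤ y)).card := by
  apply card_lt_card
  constructor
  · intro a ha
    simp only [mem_filter, mem_univ, true_and] at ha ⊢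
    exact ha.trans h.le
  · intro hsub
    have := hsub (by simp : y ∈ univ.filter (· ≤ y))
    simp only [mem_filter, mem_univ, true_and] at this
    exact absurd (le_antisymm this h.le) (ne_of_gt h)

lemma kx_lt {x y : M} (h : x < y) : kx x < kx y := by
  unfold kx
  exact karith (dcard_lt h) (by have := (Fintype.equivFin M x).isLt; omega)

lemma kx_le {x y : M} (h : x ≤ y) : kx x ≤ kx y := by
  rcases eq_or_lt_of_le h with h | h
  · subst h; exact le_rfl
  · exact (kx_lt h).le

lemma kx_inj {x y : M} (h : kx x = kx y) : x = y := by
  unfold kx at h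
  rcases Nat.lt_trichotomy ((univ.filter (· ≤ x)).card) ((univ.filter (· ≤ y)).card) with hc | hc | hc
  · exact absurd h (Nat.ne_of_lt (karith hc (by have := (Fintype.equivFin M x).isLt; omega)))
  · have hv : ((Fintype.equivFin M x).val : ℕ) = (Fintype.equivFin M y).val := by
      rw [hc] at h; omega
    have : Fintype.equivFin M x = Fintype.equivFin M y := Fin.ext hv
    exact (Fintype.equivFin M).injective this
  · exact absurd h.symm (Nat.ne_of_lt (karith hc (by have := (Fintype.equivFin M y).isLt; omega)))

lemma kx_le_rev {x y : M} (hle : y ≤ x) (h : kx x ≤ kx y) : x = y := by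
  rcases eq_or_lt_of_le hle with h' | h'
  · exact h'.symm
  · exact absurd h (not_le.mpr (kx_lt h'))

/-- Key on workers. -/
def keyW : Work M → ℕ
  | Sum.inl z => kx z
  | Sum.inr _ => 0

@[simp] lemma keyW_wL (z : M) : keyW (wL z) = kx z := rfl

/-- Acceptable workers of the real firm `f`. -/
def Df (f : M) : Finset (Work M) := (univ.filter (· ≤ f)).image wL

@[simp] lemma mem_Df {f : M} {w : Work M} : w ∈ Df f ↔ ∃ z : M, z ≤ f ∧ w = wL z := by
  simp only [Df, mem_image, mem_filter, mem_univ, true_and]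
  constructor
  · rintro ⟨z, hz, rfl⟩; exact ⟨z, hz, rfl⟩
  · rintro ⟨z, hz, rfl⟩; exact ⟨z, hz, rfl⟩

/-- Choice function of the real firm `f`: the `kx`-largest acceptable worker. -/
def Cr (f : M) (S : Finset (Work M)) : Finset (Work M) :=
  (S ∩ Df f).filter (fun w => ∀ w' ∈ S ∩ Df f, keyW w' ≤ keyW w)

lemma Cr_subset (f : M) (S : Finset (Work M)) : Cr f S ⊆ S :=
  (filter_subset _ _).trans inter_subset_left

lemma Cr_subs (f : M) : Substitutable (Cr f) := by
  intro S T a hTS ha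
  simp only [Cr, mem_filter, mem_inter] at ha ⊢
  obtain ⟨⟨haS, haD⟩, hmax⟩ := ha
  refine ⟨⟨mem_insert_self _ _, haD⟩, ?_⟩
  intro w' hw'
  obtain ⟨hw1, hw2⟩ := hw'
  rcases mem_insert.mp hw1 with h | h
  · subst h; exact le_rfl
  · exact hmax w' ⟨hTS h, hw2⟩

lemma Cr_cons (f : M) : Consistent (Cr f) := by
  intro S T h1 h2
  by_cases hS : (S ∩ Df f).Nonempty
  · obtain ⟨m, hm, hmax⟩ := exists_max_image (S ∩ Df f) keyW hS
    have hmC : m ∈ Cr f S := by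
      simp only [Cr, mem_filter]
      exact ⟨hm, hmax⟩
    have hmT : m ∈ T := h1 hmC
    ext w
    simp only [Cr, mem_filter, mem_inter]
    constructor
    · rintro ⟨⟨hwT, hwD⟩, hmaxw⟩
      refine ⟨⟨h2 hwT, hwD⟩, ?_⟩
      intro w' hw'
      obtain ⟨hw1, hw2⟩ := hw'
      calc keyW w' ≤ keyW m := hmax w' (mem_inter.mpr ⟨hw1, hw2⟩)
        _ ≤ keyW w := hmaxw m ⟨hmT, (mem_inter.mp hm).2⟩
    · rintro ⟨⟨hwS, hwD⟩, hmaxw⟩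
      have hwC : w ∈ Cr f S := by
        simp only [Cr, mem_filter, mem_inter]
        exact ⟨⟨hwS, hwD⟩, fun w' hw' => hmaxw w' hw'⟩
      refine ⟨⟨h1 hwC, hwD⟩, ?_⟩
      intro w' hw'
      obtain ⟨hw1, hw2⟩ := hw'
      exact hmaxw w' ⟨h2 hw1, hw2⟩
  · have hT : T ∩ Df f = ∅ := by
      rw [not_nonempty_iff_eq_empty] at hS
      apply subset_empty.mp
      rw [← hS]
      exact inter_subset_inter h2 Subset.rfl
    rw [not_nonempty_iff_eq_empty] at hS
    simp [Cr, hS, hT]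

/-- Lattice workers currently present. -/
def Aset (S : Finset (Work M)) : Finset M := univ.filter (fun z => wL z ∈ S)

@[simp] lemma mem_Aset {S : Finset (Work M)} {z : M} : z ∈ Aset S ↔ wL z ∈ S := by
  simp [Aset]

/-- Which workers the hub keeps, given current lattice workers. -/
def keepH (S : Finset (Work M)) : Work M → Prop
  | Sum.inl _ => True
  | Sum.inr (Sum.inl _) => False
  | Sum.inr (Sum.inr z) => ¬ z ≤ jn (Aset S)

/-- Choice function of the hub firm. -/
def Ch (S : Finset (Work M)) : Finset (Work M) := S.filter (keepH S)

@[simp] lemma keepH_wL {S : Finset (Work M)} {z : M} : keepH S (wL z) ↔ True := Iff.rfl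
@[simp] lemma keepH_wU {S : Finset (Work M)} {z : M} : keepH S (wU z) ↔ False := Iff.rfl
@[simp] lemma keepH_wT {S : Finset (Work M)} {z : M} : keepH S (wT z) ↔ ¬ z ≤ jn (Aset S) := Iff.rfl

lemma Ch_subset (S : Finset (Work M)) : Ch S ⊆ S := filter_subset _ _

lemma Aset_mono {S T : Finset (Work M)} (h : S ⊆ T) : Aset S ⊆ Aset T := by
  intro z hz
  simp only [mem_Aset] at hz ⊢
  exact h hz

lemma Aset_insert_wT {S : Finset (Work M)} {z : M} :
    Aset (insert (wT z) S) = Aset S := by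
  ext b
  simp only [mem_Aset, mem_insert]
  constructor
  · rintro (h | h)
    · exact absurd h (wL_ne_wT)
    · exact h
  · exact fun h => Or.inr h

lemma Aset_insert_wU {S : Finset (Work M)} {z : M} :
    Aset (insert (wU z) S) = Aset S := by
  ext b
  simp only [mem_Aset, mem_insert]
  constructor
  · rintro (h | h)
    · exact absurd h (wL_ne_wU)
    · exact h
  · exact fun h => Or.inr h

lemma Ch_subs : Substitutable (Ch (M := M)) := by
  intro S T a hTS ha
  simp only [Ch, mem_filter] at ha
  obtain ⟨haS, hk⟩ := ha
  simp only [Ch, mem_filter]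
  refine ⟨mem_insert_self _ _, ?_⟩
  match a with
  | Sum.inl z => trivial
  | Sum.inr (Sum.inl z) => exact hk
  | Sum.inr (Sum.inr z) =>
    intro hle
    apply hk
    refine hle.trans (jn_mono ?_)
    rw [show (Sum.inr (Sum.inr z) : Work M) = wT z from rfl, Aset_insert_wT]
    exact Aset_mono hTS

lemma Ch_cons : Consistent (Ch (M := M)) := by
  intro S T h1 h2
  have hA : Aset T = Aset S := by
    apply subset_antisymm (Aset_mono h2)
    intro z hz
    simp only [mem_Aset] at hz ⊢
    apply h1
    simp only [Ch, mem_filter]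
    exact ⟨hz, trivial⟩
  ext w
  match w with
  | Sum.inl z =>
    simp only [Ch, mem_filter, keepH, and_true]
    constructor
    · exact fun hw => h2 hw
    · intro hw
      apply h1
      simp only [Ch, mem_filter]
      exact ⟨hw, trivial⟩
  | Sum.inr (Sum.inl z) =>
    simp [Ch, keepH]
  | Sum.inr (Sum.inr z) =>
    simp only [Ch, mem_filter, keepH, hA]
    constructor
    · rintro ⟨hw, hk⟩; exact ⟨h2 hw, hk⟩
    · rintro ⟨hw, hk⟩
      refine ⟨h1 ?_, hk⟩
      simp only [Ch, mem_filter]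
      exact ⟨hw, hk⟩

end Construction

end SMC

namespace SMC

noncomputable section Construction2

open scoped Classical

variable {M : Type} [Lattice M] [Fintype M] [DecidableEq M] [Nonempty M]

/-- Firms acceptable to a lattice worker: the hub and the real firms. -/
def RH (M : Type) [Lattice M] [Fintype M] [DecidableEq M] [Nonempty M] : Finset (Firm M) :=
  insert hF (univ.image rF)

@[simp] lemma hF_mem_RH : (hF : Firm M) ∈ RH M := mem_insert_self _ _
@[simp] lemma rF_mem_RH {f : M} : rF f ∈ RH M := by
  apply mem_insert_of_mem
  exact mem_image_of_mem _ (mem_univ f)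
@[simp] lemma cF_notMem_RH {z : M} : cF z ∉ RH M := by
  simp only [RH, mem_insert, mem_image]
  push_neg
  exact ⟨cF_ne_hF, fun a _ => rF_ne_cF⟩
@[simp] lemma gF_notMem_RH {z : M} : gF z ∉ RH M := by
  simp only [RH, mem_insert, mem_image]
  push_neg
  exact ⟨gF_ne_hF, fun a _ => rF_ne_gF⟩

/-- The firms' choice functions. -/
def CfI : Firm M → Finset (Work M) → Finset (Work M)
  | none => Ch
  | some (Sum.inl f) => Cr f
  | some (Sum.inr (Sum.inl z)) => chooseIf (wU z) {wL z}
  | some (Sum.inr (Sum.inr z)) => chooseIf (wT z) {wU z}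

/-- The workers' choice functions. -/
def CwI : Work M → Finset (Firm M) → Finset (Firm M)
  | Sum.inl z => chooseIf (cF z) (RH M)
  | Sum.inr (Sum.inl z) => chooseIf (gF z) {cF z}
  | Sum.inr (Sum.inr z) => chooseIf hF {gF z}

lemma CfI_hF : CfI (hF : Firm M) = Ch := rfl
lemma CfI_rF {f : M} : CfI (rF f) = Cr f := rfl
lemma CfI_cF {z : M} : CfI (cF z) = chooseIf (wU z) {wL z} := rfl
lemma CfI_gF {z : M} : CfI (gF z) = chooseIf (wT z) {wU z} := rfl
lemma CwI_wL {z : M} : CwI (wL z) = chooseIf (cF z) (RH M) := rfl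
lemma CwI_wU {z : M} : CwI (wU z) = chooseIf (gF z) {cF z} := rfl
lemma CwI_wT {z : M} : CwI (wT z) = chooseIf (hF : Firm M) {gF z} := rfl

lemma CfI_subset (f : Firm M) (S : Finset (Work M)) : CfI f S ⊆ S := by
  match f with
  | none => exact Ch_subset S
  | some (Sum.inl f) => exact Cr_subset f S
  | some (Sum.inr (Sum.inl z)) => exact chooseIf_subset _ _ _
  | some (Sum.inr (Sum.inr z)) => exact chooseIf_subset _ _ _

lemma CwI_subset (w : Work M) (S : Finset (Firm M)) : CwI w S ⊆ S := by
  match w with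
  | Sum.inl z => exact chooseIf_subset _ _ _
  | Sum.inr (Sum.inl z) => exact chooseIf_subset _ _ _
  | Sum.inr (Sum.inr z) => exact chooseIf_subset _ _ _

lemma CfI_subs (f : Firm M) : Substitutable (CfI f) := by
  match f with
  | none => exact Ch_subs
  | some (Sum.inl f) => exact Cr_subs f
  | some (Sum.inr (Sum.inl z)) => exact chooseIf_subs _ _
  | some (Sum.inr (Sum.inr z)) => exact chooseIf_subs _ _

lemma CfI_cons (f : Firm M) : Consistent (CfI f) := by
  match f with
  | none => exact Ch_cons
  | some (Sum.inl f) => exact Cr_cons f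
  | some (Sum.inr (Sum.inl z)) => exact chooseIf_cons _ _
  | some (Sum.inr (Sum.inr z)) => exact chooseIf_cons _ _

lemma CwI_subs (w : Work M) : Substitutable (CwI w) := by
  match w with
  | Sum.inl z => exact chooseIf_subs _ _
  | Sum.inr (Sum.inl z) => exact chooseIf_subs _ _
  | Sum.inr (Sum.inr z) => exact chooseIf_subs _ _

lemma CwI_cons (w : Work M) : Consistent (CwI w) := by
  match w with
  | Sum.inl z => exact chooseIf_cons _ _
  | Sum.inr (Sum.inl z) => exact chooseIf_cons _ _
  | Sum.inr (Sum.inr z) => exact chooseIf_cons _ _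

/-- The edges of the stable matching associated to the lattice element `x`. -/
def edge (x : M) : Firm M → Work M → Prop
  | none, Sum.inl z => z ≤ x
  | none, Sum.inr (Sum.inl _) => False
  | none, Sum.inr (Sum.inr z) => ¬ z ≤ x
  | some (Sum.inl f), Sum.inl z => z = f ⊓ x
  | some (Sum.inl _), Sum.inr _ => False
  | some (Sum.inr (Sum.inl z)), Sum.inl z' => z' = z ∧ ¬ z ≤ x
  | some (Sum.inr (Sum.inl z)), Sum.inr (Sum.inl z') => z' = z ∧ z ≤ x
  | some (Sum.inr (Sum.inl _)), Sum.inr (Sum.inr _) => False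
  | some (Sum.inr (Sum.inr _)), Sum.inl _ => False
  | some (Sum.inr (Sum.inr z)), Sum.inr (Sum.inl z') => z' = z ∧ ¬ z ≤ x
  | some (Sum.inr (Sum.inr z)), Sum.inr (Sum.inr z') => z' = z ∧ z ≤ x

/-- The stable matching associated to `x`. -/
def theta (x : M) : Finset (Firm M × Work M) :=
  univ.filter (fun p => edge x p.1 p.2)

lemma mem_theta {x : M} {f : Firm M} {w : Work M} : (f, w) ∈ theta x ↔ edge x f w := by
  simp [theta]

lemma mem_mw_theta {x : M} {f : Firm M} {w : Work M} :
    w ∈ matchedW (theta x) f ↔ edge x f w := by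
  rw [mem_matchedW, mem_theta]

lemma mem_mf_theta {x : M} {f : Firm M} {w : Work M} :
    f ∈ matchedF (theta x) w ↔ edge x f w := by
  rw [mem_matchedF, mem_theta]

/-- The hub's assigned workers in `theta x`. -/
def Hset (x : M) : Finset (Work M) :=
  ((univ.filter (· ≤ x)).image wL) ∪ ((univ.filter (fun z => ¬ z ≤ x)).image wT)

lemma mem_Hset {x : M} {w : Work M} :
    w ∈ Hset x ↔ (∃ z, z ≤ x ∧ w = wL z) ∨ (∃ z, ¬ z ≤ x ∧ w = wT z) := by
  simp only [Hset, mem_union, mem_image, mem_filter, mem_univ, true_and]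
  constructor
  · rintro (⟨z, h1, rfl⟩ | ⟨z, h1, rfl⟩)
    · exact Or.inl ⟨z, h1, rfl⟩
    · exact Or.inr ⟨z, h1, rfl⟩
  · rintro (⟨z, h1, rfl⟩ | ⟨z, h1, rfl⟩)
    · exact Or.inl ⟨z, h1, rfl⟩
    · exact Or.inr ⟨z, h1, rfl⟩

lemma mw_theta_hF {x : M} : matchedW (theta x) (hF : Firm M) = Hset x := by
  ext w
  rw [mem_mw_theta, mem_Hset]
  rcases w with z | z | z <;>
    simp [edge, hF, wL, wU, wT, eq_comm]

lemma mw_theta_rF {x f : M} : matchedW (theta x) (rF f) = {wL (f ⊓ x)} := by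
  ext w
  rw [mem_mw_theta, mem_singleton]
  rcases w with z | z | z <;>
    simp [edge, rF, wL, wU, wT, eq_comm]

lemma mw_theta_cF {x z : M} :
    matchedW (theta x) (cF z) = if z ≤ x then {wU z} else {wL z} := by
  ext w
  rw [mem_mw_theta]
  by_cases hz : z ≤ x <;>
    rcases w with z' | z' | z' <;>
      simp [edge, cF, wL, wU, wT, hz] <;> aesop

lemma mw_theta_gF {x z : M} :
    matchedW (theta x) (gF z) = if z ≤ x then {wT z} else {wU z} := by
  ext w
  rw [mem_mw_theta]
  by_cases hz : z ≤ x <;>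
    rcases w with z' | z' | z' <;>
      simp [edge, gF, wL, wU, wT, hz] <;> aesop

lemma mf_theta_wL {x z : M} :
    matchedF (theta x) (wL z) =
      if z ≤ x then insert (hF : Firm M) ((univ.filter (fun f => f ⊓ x = z)).image rF)
      else {cF z} := by
  ext g
  rw [mem_mf_theta]
  by_cases hz : z ≤ x <;>
    rcases g with _ | f | z' | z' <;>
      simp [edge, hF, rF, cF, gF, wL, hz, eq_comm] <;>
        first
          | aesop
          | (intro h; exact hz (h ▸ inf_le_right))

lemma mf_theta_wU {x z : M} :
    matchedF (theta x) (wU z) = if z ≤ x then {cF z} else {gF z} := by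
  ext g
  rw [mem_mf_theta]
  by_cases hz : z ≤ x <;>
    rcases g with _ | f | z' | z' <;>
      simp [edge, hF, rF, cF, gF, wU, hz] <;> aesop

lemma mf_theta_wT {x z : M} :
    matchedF (theta x) (wT z) = if z ≤ x then {gF z} else {hF} := by
  ext g
  rw [mem_mf_theta]
  by_cases hz : z ≤ x <;>
    rcases g with _ | f | z' | z' <;>
      simp [edge, hF, rF, cF, gF, wT, hz] <;> aesop

lemma Aset_Hset {x : M} : Aset (Hset x) = univ.filter (· ≤ x) := by
  ext z
  simp only [mem_Aset, mem_Hset, mem_filter, mem_univ, true_and]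
  constructor
  · rintro (⟨z', h1, h2⟩ | ⟨z', h1, h2⟩)
    · rw [show z = z' from by simpa [wL] using h2]; exact h1
    · exact absurd h2 wL_ne_wT
  · intro h; exact Or.inl ⟨z, h, rfl⟩

lemma jn_Aset_Hset {x : M} : jn (Aset (Hset x)) = x := by
  rw [Aset_Hset, jn_Icc]

end Construction2

end SMC

namespace SMC

noncomputable section Construction3

open scoped Classical

variable {M : Type} [Lattice M] [Fintype M] [DecidableEq M] [Nonempty M]

lemma Hset_subsets {x : M} {w : Work M} (h : w ∈ Hset x) :
    (∃ z, z ≤ x ∧ w = wL z) ∨ (∃ z, ¬ z ≤ x ∧ w = wT z) := mem_Hset.mp h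

lemma wL_mem_Hset {x z : M} : wL z ∈ Hset x ↔ z ≤ x := by
  rw [mem_Hset]
  constructor
  · rintro (⟨z', h1, h2⟩ | ⟨z', h1, h2⟩)
    · rw [show z = z' from by simpa using h2]; exact h1
    · exact absurd h2 wL_ne_wT
  · intro h; exact Or.inl ⟨z, h, rfl⟩

lemma wT_mem_Hset {x z : M} : wT z ∈ Hset x ↔ ¬ z ≤ x := by
  rw [mem_Hset]
  constructor
  · rintro (⟨z', h1, h2⟩ | ⟨z', h1, h2⟩)
    · exact absurd h2 wT_ne_wL
    · rw [show z = z' from by simpa using h2]; exact h1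
  · intro h; exact Or.inr ⟨z, h, rfl⟩

lemma wU_notMem_Hset {x z : M} : wU z ∉ Hset x := by
  rw [mem_Hset]
  rintro (⟨z', h1, h2⟩ | ⟨z', h1, h2⟩)
  · exact wL_ne_wU h2.symm
  · exact wT_ne_wU h2.symm

lemma IR_h {x : M} : Ch (Hset x) = Hset x := by
  ext w
  simp only [Ch, mem_filter]
  constructor
  · exact fun h => h.1
  · intro hw
    refine ⟨hw, ?_⟩
    rcases w with z | z | z
    · trivial
    · exact absurd hw (wU_notMem_Hset)
    · show ¬ z ≤ jn (Aset (Hset x))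
      rw [jn_Aset_Hset]
      exact wT_mem_Hset.mp hw

lemma Cr_singleton {f a : M} (h : a ≤ f) : Cr f {wL a} = {wL a} := by
  have h1 : ({wL a} : Finset (Work M)) ∩ Df f = {wL a} := by
    rw [inter_eq_left, singleton_subset_iff, mem_Df]
    exact ⟨a, h, rfl⟩
  rw [Cr, h1]
  apply filter_true_of_mem
  intro w hw w' hw'
  rw [mem_singleton] at hw hw'
  subst hw; subst hw'
  exact le_rfl

lemma Cr_pair {f a b : M} (ha : a ≤ f) (hb : b ≤ f) (hk : kx a ≤ kx b) :
    Cr f {wL b, wL a} = {wL b} := by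
  by_cases hab : a = b
  · subst hab
    simpa using Cr_singleton (M := M) ha
  · have h1 : ({wL b, wL a} : Finset (Work M)) ∩ Df f = {wL b, wL a} := by
      rw [inter_eq_left, insert_subset_iff, singleton_subset_iff, mem_Df, mem_Df]
      exact ⟨⟨b, hb, rfl⟩, ⟨a, ha, rfl⟩⟩
    rw [Cr, h1]
    ext w
    simp only [mem_filter, mem_insert, mem_singleton]
    constructor
    · rintro ⟨(rfl | rfl), hmax⟩
      · rfl
      · exfalso
        have := hmax (wL b) (by simp)
        simp only [keyW_wL] at this
        exact hab (kx_inj (le_antisymm hk this))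
    · rintro rfl
      refine ⟨Or.inl rfl, ?_⟩
      rintro w' (rfl | rfl) <;> simp [keyW_wL, hk]

lemma theta_IR_firms {x : M} (f : Firm M) :
    CfI f (matchedW (theta x) f) = matchedW (theta x) f := by
  rcases f with _ | (f | z | z)
  · show Ch (matchedW (theta x) hF) = matchedW (theta x) hF
    rw [mw_theta_hF]; exact IR_h
  · show Cr f (matchedW (theta x) (rF f)) = matchedW (theta x) (rF f)
    rw [mw_theta_rF]
    exact Cr_singleton inf_le_left
  · show chooseIf (wU z) {wL z} (matchedW (theta x) (cF z)) = matchedW (theta x) (cF z)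
    rw [mw_theta_cF]
    by_cases hz : z ≤ x
    · rw [if_pos hz, chooseIf_pos (mem_singleton_self _)]
    · rw [if_neg hz, chooseIf_neg (by simp), inter_eq_left]
  · show chooseIf (wT z) {wU z} (matchedW (theta x) (gF z)) = matchedW (theta x) (gF z)
    rw [mw_theta_gF]
    by_cases hz : z ≤ x
    · rw [if_pos hz, chooseIf_pos (mem_singleton_self _)]
    · rw [if_neg hz, chooseIf_neg (by simp), inter_eq_left]

lemma theta_IR_workers {x : M} (w : Work M) :
    CwI w (matchedF (theta x) w) = matchedF (theta x) w := by
  rcases w with z | z | z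
  · show chooseIf (cF z) (RH M) (matchedF (theta x) (wL z)) = matchedF (theta x) (wL z)
    rw [mf_theta_wL]
    by_cases hz : z ≤ x
    · rw [if_pos hz, chooseIf_neg, inter_eq_left]
      · apply insert_subset hF_mem_RH
        intro g hg
        rw [mem_image] at hg
        obtain ⟨a, _, rfl⟩ := hg
        exact rF_mem_RH
      · rw [mem_insert]
        push_neg
        refine ⟨cF_ne_hF, ?_⟩
        intro hmem
        rw [mem_image] at hmem
        obtain ⟨a, _, hc⟩ := hmem
        exact rF_ne_cF hc
    · rw [if_neg hz, chooseIf_pos (mem_singleton_self _)]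
  · show chooseIf (gF z) {cF z} (matchedF (theta x) (wU z)) = matchedF (theta x) (wU z)
    rw [mf_theta_wU]
    by_cases hz : z ≤ x
    · rw [if_pos hz, chooseIf_neg (by simp), inter_eq_left]
    · rw [if_neg hz, chooseIf_pos (mem_singleton_self _)]
  · show chooseIf (hF : Firm M) {gF z} (matchedF (theta x) (wT z)) = matchedF (theta x) (wT z)
    rw [mf_theta_wT]
    by_cases hz : z ≤ x
    · rw [if_pos hz, chooseIf_neg (by simp), inter_eq_left]
    · rw [if_neg hz, chooseIf_pos (mem_singleton_self _)]

end Construction3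

end SMC

namespace SMC

noncomputable section Construction4

open scoped Classical

variable {M : Type} [Lattice M] [Fintype M] [DecidableEq M] [Nonempty M]

lemma mem_Cr_Df {f : M} {S : Finset (Work M)} {w : Work M} (h : w ∈ Cr f S) :
    ∃ z, z ≤ f ∧ w = wL z :=
  mem_Df.mp (mem_inter.mp (mem_filter.mp h).1).2

lemma Cr_max {f : M} {S : Finset (Work M)} {w : Work M} (h : w ∈ Cr f S) :
    ∀ w' ∈ S ∩ Df f, keyW w' ≤ keyW w :=
  (mem_filter.mp h).2

lemma theta_noblock {x : M} (f : Firm M) (w : Work M) (hnm : (f, w) ∉ theta x) :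
    ¬ (f ∈ CwI w (insert f (matchedF (theta x) w)) ∧
       w ∈ CfI f (insert w (matchedW (theta x) f))) := by
  rintro ⟨hw, hf⟩
  rw [mem_theta] at hnm
  rcases f with _ | (f | zf | zf) <;> rcases w with z | z | z
  -- (hF, wL z)
  · have hz : ¬ z ≤ x := by simpa [edge] using hnm
    have hw' : (hF : Firm M) ∈ chooseIf (cF z) (RH M) (insert hF (matchedF (theta x) (wL z))) := hw
    rw [mf_theta_wL, if_neg hz] at hw'
    rw [chooseIf_pos (by simp)] at hw'
    simp at hw'
  -- (hF, wU z)
  · have hf' : wU z ∈ Ch (insert (wU z) (matchedW (theta x) hF)) := hf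
    exact (mem_filter.mp hf').2
  -- (hF, wT z)
  · have hz : z ≤ x := not_not.mp (by simpa [edge] using hnm)
    have hf' : wT z ∈ Ch (insert (wT z) (matchedW (theta x) hF)) := hf
    rw [mw_theta_hF] at hf'
    have hk := (mem_filter.mp hf').2
    rw [show keepH (insert (wT z) (Hset x)) (wT z) =
        ¬ z ≤ jn (Aset (insert (wT z) (Hset x))) from rfl, Aset_insert_wT, Aset_Hset, jn_Icc] at hk
    exact hk hz
  -- (rF f, wL z)
  · have hz : z ≠ f ⊓ x := by simpa [edge] using hnm
    by_cases hzx : z ≤ x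
    · have hf' : wL z ∈ Cr f (insert (wL z) (matchedW (theta x) (rF f))) := hf
      rw [mw_theta_rF] at hf'
      obtain ⟨z', hz'f, hzz'⟩ := mem_Cr_Df hf'
      have hzf : z ≤ f := by rw [show z = z' from by simpa using hzz']; exact hz'f
      have hmax := Cr_max hf' (wL (f ⊓ x)) (by
        rw [mem_inter, mem_Df]
        exact ⟨by simp, ⟨f ⊓ x, inf_le_left, rfl⟩⟩)
      simp only [keyW_wL] at hmax
      have hle : z ≤ f ⊓ x := le_inf hzf hzx
      exact hz (kx_inj (le_antisymm (kx_le hle) hmax))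
    · have hw' : rF f ∈ chooseIf (cF z) (RH M) (insert (rF f) (matchedF (theta x) (wL z))) := hw
      rw [mf_theta_wL, if_neg hzx] at hw'
      rw [chooseIf_pos (by simp)] at hw'
      simp at hw'
  -- (rF f, wU z)
  · obtain ⟨z', _, h⟩ := mem_Cr_Df (show wU z ∈ Cr f _ from hf)
    exact wU_ne_wL h
  -- (rF f, wT z)
  · obtain ⟨z', _, h⟩ := mem_Cr_Df (show wT z ∈ Cr f _ from hf)
    exact wT_ne_wL h
  -- (cF zf, wL z)
  · have hnm' : ¬ (z = zf ∧ ¬ zf ≤ x) := by simpa [edge] using hnm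
    have hf' : wL z ∈ chooseIf (wU zf) {wL zf} (insert (wL z) (matchedW (theta x) (cF zf))) := hf
    by_cases hzz : z = zf
    · subst hzz
      have hx : z ≤ x := not_not.mp (fun hx => hnm' ⟨rfl, hx⟩)
      rw [mw_theta_cF, if_pos hx, chooseIf_pos (by simp)] at hf'
      simp at hf'
    · rcases mem_chooseIf_cases hf' with h | h
      · exact wL_ne_wU h
      · exact hzz (by simpa using h)
  -- (cF zf, wU z)
  · have hnm' : ¬ (z = zf ∧ zf ≤ x) := by simpa [edge] using hnm
    by_cases hzz : z = zf
    · subst hzz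
      have hx : ¬ z ≤ x := fun hx => hnm' ⟨rfl, hx⟩
      have hw' : cF z ∈ chooseIf (gF z) {cF z} (insert (cF z) (matchedF (theta x) (wU z))) := hw
      rw [mf_theta_wU, if_neg hx, chooseIf_pos (by simp)] at hw'
      simp at hw'
    · have hf' : wU z ∈ chooseIf (wU zf) {wL zf} (insert (wU z) (matchedW (theta x) (cF zf))) := hf
      rcases mem_chooseIf_cases hf' with h | h
      · exact hzz (by simpa using h)
      · exact wU_ne_wL (mem_singleton.mp h)
  -- (cF zf, wT z)
  · have hf' : wT z ∈ chooseIf (wU zf) {wL zf} (insert (wT z) (matchedW (theta x) (cF zf))) := hf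
    rcases mem_chooseIf_cases hf' with h | h
    · exact wT_ne_wU h
    · exact wT_ne_wL (mem_singleton.mp h)
  -- (gF zf, wL z)
  · have hf' : wL z ∈ chooseIf (wT zf) {wU zf} (insert (wL z) (matchedW (theta x) (gF zf))) := hf
    rcases mem_chooseIf_cases hf' with h | h
    · exact wL_ne_wT h
    · exact wL_ne_wU (mem_singleton.mp h)
  -- (gF zf, wU z)
  · have hnm' : ¬ (z = zf ∧ ¬ zf ≤ x) := by simpa [edge] using hnm
    by_cases hzz : z = zf
    · subst hzz
      have hx : z ≤ x := not_not.mp (fun hx => hnm' ⟨rfl, hx⟩)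
      have hf' : wU z ∈ chooseIf (wT z) {wU z} (insert (wU z) (matchedW (theta x) (gF z))) := hf
      rw [mw_theta_gF, if_pos hx, chooseIf_pos (by simp)] at hf'
      simp at hf'
    · have hf' : wU z ∈ chooseIf (wT zf) {wU zf} (insert (wU z) (matchedW (theta x) (gF zf))) := hf
      rcases mem_chooseIf_cases hf' with h | h
      · exact wU_ne_wT h
      · exact hzz (by simpa using h)
  -- (gF zf, wT z)
  · have hnm' : ¬ (z = zf ∧ zf ≤ x) := by simpa [edge] using hnm
    by_cases hzz : z = zf
    · subst hzz
      have hx : ¬ z ≤ x := fun hx => hnm' ⟨rfl, hx⟩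
      have hw' : gF z ∈ chooseIf (hF : Firm M) {gF z} (insert (gF z) (matchedF (theta x) (wT z))) := hw
      rw [mf_theta_wT, if_neg hx, chooseIf_pos (by simp)] at hw'
      simp at hw'
    · have hf' : wT z ∈ chooseIf (wT zf) {wU zf} (insert (wT z) (matchedW (theta x) (gF zf))) := hf
      rcases mem_chooseIf_cases hf' with h | h
      · exact hzz (by simpa using h)
      · exact wT_ne_wU (mem_singleton.mp h)

lemma theta_stable {x : M} : IsStable (CfI (M := M)) (CwI (M := M)) (theta x) :=
  ⟨theta_IR_firms, theta_IR_workers, theta_noblock⟩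

end Construction4

end SMC

namespace SMC

noncomputable section Construction5

open scoped Classical

variable {M : Type} [Lattice M] [Fintype M] [DecidableEq M] [Nonempty M]

lemma Aset_Hset_union {x y : M} (hxy : x ≤ y) :
    Aset (Hset y ∪ Hset x) = univ.filter (· ≤ y) := by
  ext z
  simp only [mem_Aset, mem_union, wL_mem_Hset, mem_filter, mem_univ, true_and]
  constructor
  · rintro (h | h)
    · exact h
    · exact h.trans hxy
  · exact fun h => Or.inl h

lemma inl_mem_Hset {x z : M} : (Sum.inl z : Work M) ∈ Hset x ↔ z ≤ x := wL_mem_Hset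
lemma inrr_mem_Hset {x z : M} : (Sum.inr (Sum.inr z) : Work M) ∈ Hset x ↔ ¬ z ≤ x := wT_mem_Hset
lemma inrl_notMem_Hset {x z : M} : (Sum.inr (Sum.inl z) : Work M) ∉ Hset x := wU_notMem_Hset

lemma jn_Aset_Hset_union {x y : M} (hxy : x ≤ y) : jn (Aset (Hset y ∪ Hset x)) = y := by
  rw [Aset_Hset_union hxy, jn_Icc]

lemma union_pair {a b : Work M} : ({a} : Finset (Work M)) ∪ {b} = {a, b} := by
  ext w; simp [mem_union, mem_insert, mem_singleton]

lemma theta_firmGE_of_le {x y : M} (hxy : x ≤ y) :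
    FirmGE (CfI (M := M)) (theta y) (theta x) := by
  intro f
  rcases f with _ | (f | z | z)
  · show Ch (matchedW (theta y) hF ∪ matchedW (theta x) hF) = matchedW (theta y) hF
    rw [mw_theta_hF, mw_theta_hF]
    ext w
    simp only [Ch, mem_filter]
    rcases w with z | z | z
    · simp only [keepH, and_true, mem_union, inl_mem_Hset]
      constructor
      · rintro (h | h)
        · exact h
        · exact h.trans hxy
      · intro h; exact Or.inl h
    · simp only [keepH, and_false, false_iff]
      exact inrl_notMem_Hset
    · simp only [keepH, mem_union, inrr_mem_Hset, jn_Aset_Hset_union hxy]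
      constructor
      · rintro ⟨_, h2⟩; exact h2
      · intro h; exact ⟨Or.inl h, h⟩
  · show Cr f (matchedW (theta y) (rF f) ∪ matchedW (theta x) (rF f)) = matchedW (theta y) (rF f)
    rw [mw_theta_rF, mw_theta_rF, union_pair]
    exact Cr_pair inf_le_left inf_le_left (kx_le (inf_le_inf_left f hxy))
  · show chooseIf (wU z) {wL z} (matchedW (theta y) (cF z) ∪ matchedW (theta x) (cF z)) =
      matchedW (theta y) (cF z)
    rw [mw_theta_cF, mw_theta_cF]
    by_cases hzy : z ≤ y
    · rw [if_pos hzy]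
      by_cases hzx : z ≤ x
      · rw [if_pos hzx, union_self, chooseIf_pos (mem_singleton_self _)]
      · rw [if_neg hzx, chooseIf_pos (by simp)]
    · have hzx : ¬ z ≤ x := fun h => hzy (h.trans hxy)
      rw [if_neg hzy, if_neg hzx, union_self, chooseIf_neg (by simp), inter_eq_left]
  · show chooseIf (wT z) {wU z} (matchedW (theta y) (gF z) ∪ matchedW (theta x) (gF z)) =
      matchedW (theta y) (gF z)
    rw [mw_theta_gF, mw_theta_gF]
    by_cases hzy : z ≤ y
    · rw [if_pos hzy]
      by_cases hzx : z ≤ x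
      · rw [if_pos hzx, union_self, chooseIf_pos (mem_singleton_self _)]
      · rw [if_neg hzx, chooseIf_pos (by simp)]
    · have hzx : ¬ z ≤ x := fun h => hzy (h.trans hxy)
      rw [if_neg hzy, if_neg hzx, union_self, chooseIf_neg (by simp), inter_eq_left]

lemma theta_le_of_firmGE {x y : M}
    (h : FirmGE (CfI (M := M)) (theta y) (theta x)) : x ≤ y := by
  have h1 : Cr x (matchedW (theta y) (rF x) ∪ matchedW (theta x) (rF x)) =
      matchedW (theta y) (rF x) := h (rF x)
  rw [mw_theta_rF, mw_theta_rF, inf_idem, union_pair] at h1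
  have hx : wL x ∈ Cr x {wL (x ⊓ y), wL x} := by
    rw [Cr]
    have hS : ({wL (x ⊓ y), wL x} : Finset (Work M)) ∩ Df x = {wL (x ⊓ y), wL x} := by
      rw [inter_eq_left, insert_subset_iff, singleton_subset_iff, mem_Df, mem_Df]
      exact ⟨⟨x ⊓ y, inf_le_left, rfl⟩, ⟨x, le_rfl, rfl⟩⟩
    rw [hS, mem_filter]
    refine ⟨by simp, ?_⟩
    rintro w' hw'
    rcases mem_insert.mp hw' with rfl | hw'
    · simp only [keyW_wL]; exact kx_le inf_le_left
    · rw [mem_singleton.mp hw']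
  rw [h1, mem_singleton] at hx
  have : x ⊓ y = x := (by simpa using hx : x = x ⊓ y).symm
  exact inf_eq_left.mp this

lemma theta_inj : Function.Injective (theta (M := M)) := by
  intro x y h
  have key : ∀ a b : M, theta a = theta b → a ≤ b := by
    intro a b hab
    have hm : (rF a, wL a) ∈ theta a := by
      rw [mem_theta]
      show a = a ⊓ a
      rw [inf_idem]
    rw [hab, mem_theta] at hm
    have : a = a ⊓ b := hm
    exact inf_eq_left.mp this.symm
  exact le_antisymm (key x y h) (key y x h.symm)

end Construction5

end SMC

namespace SMC

noncomputable section Completeness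

open scoped Classical

variable {M : Type} [Lattice M] [Fintype M] [DecidableEq M] [Nonempty M]
variable {μ : Finset (Firm M × Work M)}

/-- Abbreviation: the lattice element associated to a stable matching. -/
def xof (μ : Finset (Firm M × Work M)) : M := jn (Aset (matchedW μ (hF : Firm M)))

section
variable (hIRf : ∀ f, CfI f (matchedW μ f) = matchedW μ f)
variable (hIRw : ∀ w, CwI w (matchedF μ w) = matchedF μ w)
variable (hNB : ∀ f w, (f, w) ∉ μ →
    ¬ (f ∈ CwI w (insert f (matchedF μ w)) ∧ w ∈ CfI f (insert w (matchedW μ f))))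

include hIRf hIRw hNB

lemma cfg_dichotomy (z : M) : (cF z, wU z) ∈ μ ∨ (gF z, wU z) ∈ μ := by
  rcases chooseIf_fixed
      (show chooseIf (gF z) {cF z} (matchedF μ (wU z)) = matchedF μ (wU z) from hIRw (wU z))
    with ⟨hg, _⟩ | ⟨hg, hsub⟩
  · right; exact mem_matchedF.mp hg
  · by_cases hc : cF z ∈ matchedF μ (wU z)
    · left; exact mem_matchedF.mp hc
    · exfalso
      apply hNB (cF z) (wU z) (fun hm => hc (mem_matchedF.mpr hm))
      constructor
      · show cF z ∈ chooseIf (gF z) {cF z} (insert (cF z) (matchedF μ (wU z)))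
        rw [chooseIf_neg (by
          rw [mem_insert]
          rintro (h | h)
          · exact gF_ne_cF h
          · exact hg h)]
        exact mem_inter.mpr ⟨mem_insert_self _ _, mem_singleton_self _⟩
      · show wU z ∈ chooseIf (wU z) {wL z} (insert (wU z) (matchedW μ (cF z)))
        rw [chooseIf_pos (mem_insert_self _ _)]
        exact mem_singleton_self _

lemma not_hU (z : M) : (hF, wU z) ∉ μ := by
  intro h
  have hmem : wU z ∈ matchedW μ (hF : Firm M) := mem_matchedW.mpr h
  have hfix : Ch (matchedW μ (hF : Firm M)) = matchedW μ (hF : Firm M) := hIRf hF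
  rw [← hfix] at hmem
  exact (mem_filter.mp hmem).2

lemma not_le_of_hT (z : M) (h : (hF, wT z) ∈ μ) : ¬ z ≤ xof μ := by
  have hmem : wT z ∈ matchedW μ (hF : Firm M) := mem_matchedW.mpr h
  have hfix : Ch (matchedW μ (hF : Firm M)) = matchedW μ (hF : Firm M) := hIRf hF
  rw [← hfix] at hmem
  exact (mem_filter.mp hmem).2

lemma gadget_cases (z : M) :
    ((hF, wL z) ∈ μ ∧ z ≤ xof μ ∧ matchedW μ (cF z) = {wU z} ∧ matchedW μ (gF z) = {wT z}
      ∧ (hF, wT z) ∉ μ ∧ cF z ∉ matchedF μ (wL z) ∧ matchedF μ (wL z) ⊆ RH M)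
  ∨ ((hF, wL z) ∉ μ ∧ ¬ z ≤ xof μ ∧ matchedW μ (cF z) = {wL z} ∧ matchedW μ (gF z) = {wU z}
      ∧ (hF, wT z) ∈ μ ∧ matchedF μ (wL z) = {cF z}) := by
  by_cases hcu : (cF z, wU z) ∈ μ
  · -- configuration 1: z is active
    left
    have s1 : matchedW μ (cF z) = {wU z} := by
      rcases chooseIf_fixed
          (show chooseIf (wU z) {wL z} (matchedW μ (cF z)) = matchedW μ (cF z) from hIRf (cF z))
        with ⟨_, h2⟩ | ⟨h1, _⟩
      · exact h2
      · exact absurd (mem_matchedW.mpr hcu) h1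
    have s2 : (cF z, wL z) ∉ μ := by
      intro h
      have := mem_matchedW.mpr h
      rw [s1] at this
      exact wL_ne_wU (mem_singleton.mp this)
    have s3 : cF z ∉ matchedF μ (wL z) := fun h => s2 (mem_matchedF.mp h)
    have s4 : matchedF μ (wL z) ⊆ RH M := by
      rcases chooseIf_fixed
          (show chooseIf (cF z) (RH M) (matchedF μ (wL z)) = matchedF μ (wL z) from hIRw (wL z))
        with ⟨h1, _⟩ | ⟨_, h2⟩
      · exact absurd h1 s3
      · exact h2
    have s5 : (hF, wL z) ∈ μ := by
      by_contra hno
      apply hNB hF (wL z) hno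
      constructor
      · show hF ∈ chooseIf (cF z) (RH M) (insert hF (matchedF μ (wL z)))
        rw [chooseIf_neg (by
          rw [mem_insert]
          rintro (h | h)
          · exact cF_ne_hF h
          · exact s3 h)]
        exact mem_inter.mpr ⟨mem_insert_self _ _, hF_mem_RH⟩
      · show wL z ∈ Ch (insert (wL z) (matchedW μ (hF : Firm M)))
        rw [Ch, mem_filter]
        exact ⟨mem_insert_self _ _, trivial⟩
    have s6 : z ≤ xof μ := le_jn (mem_Aset.mpr (mem_matchedW.mpr s5))
    have s7 : (hF, wT z) ∉ μ := fun h => not_le_of_hT hIRf hIRw hNB z h s6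
    have s8 : (gF z, wT z) ∈ μ := by
      rcases chooseIf_fixed
          (show chooseIf (hF : Firm M) {gF z} (matchedF μ (wT z)) = matchedF μ (wT z) from
            hIRw (wT z))
        with ⟨h1, _⟩ | ⟨h1, h2⟩
      · exact absurd (mem_matchedF.mp h1) s7
      · by_cases hg : gF z ∈ matchedF μ (wT z)
        · exact mem_matchedF.mp hg
        · exfalso
          apply hNB (gF z) (wT z) (fun h => hg (mem_matchedF.mpr h))
          constructor
          · show gF z ∈ chooseIf (hF : Firm M) {gF z} (insert (gF z) (matchedF μ (wT z)))
            rw [chooseIf_neg (by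
              rw [mem_insert]
              rintro (h | h)
              · exact hF_ne_gF h
              · exact h1 h)]
            exact mem_inter.mpr ⟨mem_insert_self _ _, mem_singleton_self _⟩
          · show wT z ∈ chooseIf (wT z) {wU z} (insert (wT z) (matchedW μ (gF z)))
            rw [chooseIf_pos (mem_insert_self _ _)]
            exact mem_singleton_self _
    have s9 : matchedW μ (gF z) = {wT z} := by
      rcases chooseIf_fixed
          (show chooseIf (wT z) {wU z} (matchedW μ (gF z)) = matchedW μ (gF z) from hIRf (gF z))
        with ⟨_, h2⟩ | ⟨h1, _⟩
      · exact h2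
      · exact absurd (mem_matchedW.mpr s8) h1
    exact ⟨s5, s6, s1, s9, s7, s3, s4⟩
  · -- configuration 2: z is captured
    right
    have hgu : (gF z, wU z) ∈ μ := (cfg_dichotomy hIRf hIRw hNB z).resolve_left hcu
    have t1 : matchedW μ (gF z) = {wU z} := by
      rcases chooseIf_fixed
          (show chooseIf (wT z) {wU z} (matchedW μ (gF z)) = matchedW μ (gF z) from hIRf (gF z))
        with ⟨_, h2⟩ | ⟨h1, h2⟩
      · exfalso
        have := mem_matchedW.mpr hgu
        rw [h2] at this
        exact wU_ne_wT (mem_singleton.mp this)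
      · exact subset_antisymm h2 (singleton_subset_iff.mpr (mem_matchedW.mpr hgu))
    have t2 : (gF z, wT z) ∉ μ := by
      intro h
      have := mem_matchedW.mpr h
      rw [t1] at this
      exact wT_ne_wU (mem_singleton.mp this)
    have t3 : wU z ∉ matchedW μ (cF z) ∧ matchedW μ (cF z) ⊆ {wL z} := by
      rcases chooseIf_fixed
          (show chooseIf (wU z) {wL z} (matchedW μ (cF z)) = matchedW μ (cF z) from hIRf (cF z))
        with ⟨h1, _⟩ | ⟨h1, h2⟩
      · exact absurd (mem_matchedW.mp h1) hcu
      · exact ⟨h1, h2⟩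
    have t4 : (cF z, wL z) ∈ μ := by
      by_contra hno
      apply hNB (cF z) (wL z) hno
      constructor
      · show cF z ∈ chooseIf (cF z) (RH M) (insert (cF z) (matchedF μ (wL z)))
        rw [chooseIf_pos (mem_insert_self _ _)]
        exact mem_singleton_self _
      · show wL z ∈ chooseIf (wU z) {wL z} (insert (wL z) (matchedW μ (cF z)))
        rw [chooseIf_neg (by
          rw [mem_insert]
          rintro (h | h)
          · exact wU_ne_wL h
          · exact t3.1 h)]
        exact mem_inter.mpr ⟨mem_insert_self _ _, mem_singleton_self _⟩
    have t5 : matchedW μ (cF z) = {wL z} :=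
      subset_antisymm t3.2 (singleton_subset_iff.mpr (mem_matchedW.mpr t4))
    have t6 : matchedF μ (wL z) = {cF z} := by
      rcases chooseIf_fixed
          (show chooseIf (cF z) (RH M) (matchedF μ (wL z)) = matchedF μ (wL z) from hIRw (wL z))
        with ⟨_, h2⟩ | ⟨h1, _⟩
      · exact h2
      · exact absurd (mem_matchedF.mpr t4) h1
    have t7 : (hF, wL z) ∉ μ := by
      intro h
      have := mem_matchedF.mpr h
      rw [t6] at this
      exact hF_ne_cF (mem_singleton.mp this)
    have t8 : matchedF μ (wT z) = {hF} := by
      rcases chooseIf_fixed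
          (show chooseIf (hF : Firm M) {gF z} (matchedF μ (wT z)) = matchedF μ (wT z) from
            hIRw (wT z))
        with ⟨_, h2⟩ | ⟨h1, h2⟩
      · exact h2
      · exfalso
        have hempty : matchedF μ (wT z) = ∅ := by
          rw [eq_empty_iff_forall_notMem]
          intro g hg
          have := h2 hg
          rw [mem_singleton] at this
          subst this
          exact t2 (mem_matchedF.mp hg)
        apply hNB (gF z) (wT z) t2
        constructor
        · show gF z ∈ chooseIf (hF : Firm M) {gF z} (insert (gF z) (matchedF μ (wT z)))
          rw [chooseIf_neg (by
            rw [mem_insert]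
            rintro (h | h)
            · exact hF_ne_gF h
            · exact h1 h)]
          exact mem_inter.mpr ⟨mem_insert_self _ _, mem_singleton_self _⟩
        · show wT z ∈ chooseIf (wT z) {wU z} (insert (wT z) (matchedW μ (gF z)))
          rw [chooseIf_pos (mem_insert_self _ _)]
          exact mem_singleton_self _
    have t9 : (hF, wT z) ∈ μ := by
      apply mem_matchedF.mp
      rw [t8]
      exact mem_singleton_self _
    have t10 : ¬ z ≤ xof μ := not_le_of_hT hIRf hIRw hNB z t9
    exact ⟨t7, t10, t5, t1, t9, t6⟩

lemma hL_iff (z : M) : (hF, wL z) ∈ μ ↔ z ≤ xof μ := by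
  rcases gadget_cases hIRf hIRw hNB z with ⟨h1, h2, _⟩ | ⟨h1, h2, _⟩
  · exact iff_of_true h1 h2
  · exact iff_of_false h1 h2

lemma hT_iff (z : M) : (hF, wT z) ∈ μ ↔ ¬ z ≤ xof μ := by
  rcases gadget_cases hIRf hIRw hNB z with ⟨_, h2, _, _, h5, _⟩ | ⟨_, h2, _, _, h5, _⟩
  · exact iff_of_false h5 (not_not.mpr h2)
  · exact iff_of_true h5 h2

lemma mw_c (z : M) :
    matchedW μ (cF z) = if z ≤ xof μ then {wU z} else {wL z} := by
  rcases gadget_cases hIRf hIRw hNB z with ⟨_, h2, h3, _⟩ | ⟨_, h2, h3, _⟩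
  · rw [if_pos h2]; exact h3
  · rw [if_neg h2]; exact h3

lemma mw_g (z : M) :
    matchedW μ (gF z) = if z ≤ xof μ then {wT z} else {wU z} := by
  rcases gadget_cases hIRf hIRw hNB z with ⟨_, h2, _, h4, _⟩ | ⟨_, h2, _, h4, _⟩
  · rw [if_pos h2]; exact h4
  · rw [if_neg h2]; exact h4

lemma real_partner_active {f b : M} (h : (rF f, wL b) ∈ μ) : b ≤ xof μ := by
  rcases gadget_cases hIRf hIRw hNB b with ⟨_, h2, _⟩ | ⟨_, _, _, _, _, h6⟩
  · exact h2
  · exfalso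
    have := mem_matchedF.mpr h
    rw [h6] at this
    exact rF_ne_cF (mem_singleton.mp this)

lemma mw_r (f : M) : matchedW μ (rF f) = {wL (f ⊓ xof μ)} := by
  have hfix : Cr f (matchedW μ (rF f)) = matchedW μ (rF f) := hIRf (rF f)
  have step1 : ∀ w ∈ matchedW μ (rF f), ∃ b, b ≤ f ∧ b ≤ xof μ ∧ w = wL b := by
    intro w hw
    rw [← hfix] at hw
    obtain ⟨b, hbf, rfl⟩ := mem_Cr_Df hw
    refine ⟨b, hbf, ?_, rfl⟩
    apply real_partner_active hIRf hIRw hNB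
    exact mem_matchedW.mp (Cr_subset f _ hw)
  have step2 : (rF f, wL (f ⊓ xof μ)) ∈ μ := by
    by_contra hno
    apply hNB (rF f) (wL (f ⊓ xof μ)) hno
    have hactive := (hL_iff hIRf hIRw hNB (f ⊓ xof μ)).mpr inf_le_right
    rcases gadget_cases hIRf hIRw hNB (f ⊓ xof μ) with ⟨_, _, _, _, _, hs3, _⟩ | ⟨h1, _⟩
    swap
    · exact absurd hactive h1
    constructor
    · show rF f ∈ chooseIf (cF (f ⊓ xof μ)) (RH M)
        (insert (rF f) (matchedF μ (wL (f ⊓ xof μ))))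
      rw [chooseIf_neg (by
        rw [mem_insert]
        rintro (h | h)
        · exact cF_ne_rF h
        · exact hs3 h)]
      exact mem_inter.mpr ⟨mem_insert_self _ _, rF_mem_RH⟩
    · show wL (f ⊓ xof μ) ∈ Cr f (insert (wL (f ⊓ xof μ)) (matchedW μ (rF f)))
      rw [Cr, mem_filter]
      constructor
      · rw [mem_inter, mem_Df]
        exact ⟨mem_insert_self _ _, ⟨f ⊓ xof μ, inf_le_left, rfl⟩⟩
      · intro w' hw'
        rw [mem_inter, mem_insert] at hw'
        rcases hw'.1 with rfl | hw1
        · exact le_rfl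
        · obtain ⟨b, hbf, hbx, rfl⟩ := step1 w' hw1
          simp only [keyW_wL]
          exact kx_le (le_inf hbf hbx)
  ext w
  rw [mem_singleton]
  constructor
  · intro hw
    obtain ⟨b, hbf, hbx, rfl⟩ := step1 w hw
    have hble : b ≤ f ⊓ xof μ := le_inf hbf hbx
    have hmax : keyW (wL (f ⊓ xof μ)) ≤ keyW (wL b) := by
      rw [← hfix] at hw
      apply Cr_max hw
      rw [mem_inter, mem_Df]
      exact ⟨mem_matchedW.mpr step2, ⟨f ⊓ xof μ, inf_le_left, rfl⟩⟩
    simp only [keyW_wL] at hmax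
    rw [show b = f ⊓ xof μ from kx_inj (le_antisymm (kx_le hble) hmax)]
  · rintro rfl
    exact mem_matchedW.mpr step2

lemma stable_eq_theta : μ = theta (xof μ) := by
  ext p
  obtain ⟨f, w⟩ := p
  rw [mem_theta]
  have hmwW : ∀ (g : Firm M), (g, w) ∈ μ ↔ w ∈ matchedW μ g := fun g => mem_matchedW.symm
  rcases f with _ | (f | zf | zf)
  · -- hub
    rcases w with z | z | z
    · show (hF, wL z) ∈ μ ↔ edge (xof μ) hF (wL z)
      rw [hL_iff hIRf hIRw hNB z]
      exact Iff.rfl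
    · show (hF, wU z) ∈ μ ↔ edge (xof μ) hF (wU z)
      exact iff_of_false (not_hU hIRf hIRw hNB z) (by simp [edge, hF, wU])
    · show (hF, wT z) ∈ μ ↔ edge (xof μ) hF (wT z)
      rw [hT_iff hIRf hIRw hNB z]
      exact Iff.rfl
  · -- real firm
    show (rF f, w) ∈ μ ↔ edge (xof μ) (rF f) w
    rw [hmwW (rF f), mw_r hIRf hIRw hNB f, mem_singleton]
    rcases w with z | z | z
    · simp [edge, rF, wL]
    · simp [edge, rF, wL, wU]
    · simp [edge, rF, wL, wT]
  · -- capture firm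
    show (cF zf, w) ∈ μ ↔ edge (xof μ) (cF zf) w
    rw [hmwW (cF zf), mw_c hIRf hIRw hNB zf]
    by_cases hz : zf ≤ xof μ <;>
      rcases w with z | z | z <;>
        simp [edge, cF, wL, wU, wT, hz, eq_comm] <;> aesop
  · -- gadget firm
    show (gF zf, w) ∈ μ ↔ edge (xof μ) (gF zf) w
    rw [hmwW (gF zf), mw_g hIRf hIRw hNB zf]
    by_cases hz : zf ≤ xof μ <;>
      rcases w with z | z | z <;>
        simp [edge, gF, wL, wU, wT, hz, eq_comm] <;> aesop

end

end Completeness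

end SMC

namespace SMC

theorem aux_main (M : Type) [Lattice M] [Fintype M] [DecidableEq M] [Nonempty M] :
    ∃ I : MatchingMarket,
      (∀ f, Substitutable (I.Cf f)) ∧ (∀ f, Consistent (I.Cf f)) ∧
      (∀ w, Substitutable (I.Cw w)) ∧ (∀ w, Consistent (I.Cw w)) ∧
      ∃ θ : M → Finset (I.F × I.W),
        (∀ x, IsStable I.Cf I.Cw (θ x)) ∧
        Function.Injective θ ∧
        (∀ μ, IsStable I.Cf I.Cw μ → ∃ x, θ x = μ) ∧
        (∀ x y : M, x ≤ y ↔ FirmGE I.Cf (θ y) (θ x)) := by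
  classical
  refine ⟨{ F := Firm M, W := Work M, Cf := CfI, Cw := CwI,
            Cf_subset := CfI_subset, Cw_subset := CwI_subset }, ?_, ?_, ?_, ?_, ?_⟩
  · exact CfI_subs
  · exact CfI_cons
  · exact CwI_subs
  · exact CwI_cons
  refine ⟨theta, ?_, theta_inj, ?_, ?_⟩
  · intro x
    exact theta_stable
  · intro μ hμ
    obtain ⟨hIRf, hIRw, hNB⟩ := hμ
    exact ⟨xof μ, (stable_eq_theta hIRf hIRw hNB).symm⟩
  · intro x y
    constructor
    · exact theta_firmGE_of_le
    · exact theta_le_of_firmGE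

/-- Transfer a lattice structure along an equivalence. -/
def transferLattice {α β : Type*} (e : β ≃ α) [Lattice α] : Lattice β where
  le a b := e a ≤ e b
  le_refl a := le_refl _
  le_trans a b c h1 h2 := le_trans h1 h2
  le_antisymm a b h1 h2 := e.injective (le_antisymm h1 h2)
  sup a b := e.symm (e a ⊔ e b)
  le_sup_left a b := by
    show e a ≤ e (e.symm (e a ⊔ e b))
    rw [Equiv.apply_symm_apply]
    exact le_sup_left
  le_sup_right a b := by
    show e b ≤ e (e.symm (e a ⊔ e b))
    rw [Equiv.apply_symm_apply]
    exact le_sup_right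
  sup_le a b c h1 h2 := by
    show e (e.symm (e a ⊔ e b)) ≤ e c
    rw [Equiv.apply_symm_apply]
    exact sup_le h1 h2
  inf a b := e.symm (e a ⊓ e b)
  inf_le_left a b := by
    show e (e.symm (e a ⊓ e b)) ≤ e a
    rw [Equiv.apply_symm_apply]
    exact inf_le_left
  inf_le_right a b := by
    show e (e.symm (e a ⊓ e b)) ≤ e b
    rw [Equiv.apply_symm_apply]
    exact inf_le_right
  le_inf a b c h1 h2 := by
    show e a ≤ e (e.symm (e b ⊓ e c))
    rw [Equiv.apply_symm_apply]
    exact le_inf h1 h2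

end SMC


/-- **Every finite lattice is a stable matching lattice.**
For every nonempty finite lattice `L`, there is a matching market instance with
substitutable and consistent choice functions and a bijection `θ` from `L` onto its
set of stable matchings such that `x ≤ y` iff `θ y ⪰ θ x` in the firm order. -/
theorem every_finite_lattice_is_a_stable_matching_lattice
    (L : Type*) [Lattice L] [Fintype L] [Nonempty L] :
    ∃ I : MatchingMarket,
      (∀ f, Substitutable (I.Cf f)) ∧ (∀ f, Consistent (I.Cf f)) ∧
      (∀ w, Substitutable (I.Cw w)) ∧ (∀ w, Consistent (I.Cw w)) ∧
      ∃ θ : L → Finset (I.F × I.W),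
        (∀ x, IsStable I.Cf I.Cw (θ x)) ∧
        Function.Injective θ ∧
        (∀ μ, IsStable I.Cf I.Cw μ → ∃ x, θ x = μ) ∧
        (∀ x y : L, x ≤ y ↔ FirmGE I.Cf (θ y) (θ x)) := by

  classical
  haveI : Small.{0} L := by infer_instance
  let M : Type := Shrink.{0} L
  let e : L ≃ M := equivShrink L
  letI : Lattice M := SMC.transferLattice e.symm
  letI : Fintype M := Fintype.ofEquiv L e
  letI : DecidableEq M := Classical.decEq M
  haveI : Nonempty M := ⟨e (Classical.arbitrary L)⟩
  obtain ⟨I, h1, h2, h3, h4, θ₀, hstab, hinj, hsurj, hord⟩ := SMC.aux_main M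
  refine ⟨I, h1, h2, h3, h4, θ₀ ∘ e, ?_, ?_, ?_, ?_⟩
  · intro x
    exact hstab (e x)
  · exact hinj.comp e.injective
  · intro μ hμ
    obtain ⟨m, hm⟩ := hsurj μ hμ
    refine ⟨e.symm m, ?_⟩
    show θ₀ (e (e.symm m)) = μ
    rw [Equiv.apply_symm_apply]
    exact hm
  · intro x y
    constructor
    · intro hxy
      apply (hord (e x) (e y)).mp
      show e.symm (e x) ≤ e.symm (e y)
      simpa using hxy
    · intro hge
      have h6 : e.symm (e x) ≤ e.symm (e y) := (hord (e x) (e y)).mpr hge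
      simpa using h6
end

section
/- Let L be a finite lattice with least element ⊥ and greatest element ⊤, let X_j be its set of join-irreducible elements with the induced order, and let ψ(x) = {a ∈ X_j : a ≤ x}. Then a lower closed set T of X_j lies in the image of ψ if and only if for all x, y ∈ L: ψ(x) ∪ ψ(y) ⊆ T implies ψ(x ∨ y) ⊆ T. Consequently, ψ is an order isomorphism from L (ordered by ≤) onto the family {T : T is a lower closed set of X_j and for all x, y ∈ L, ψ(x) ∪ ψ(y) ⊆ T implies ψ(x ∨ y) ⊆ T}, ordered by inclusion. -/
open scoped Classical


/-- An element of a lattice with bottom is join-irreducible if it is not `⊥` and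
is not the join of two elements both strictly below it. -/
def JoinIrr {L : Type*} [Lattice L] [OrderBot L] (a : L) : Prop :=
  a ≠ ⊥ ∧ ∀ b c : L, b < a → c < a → b ⊔ c ≠ a

private lemma le_sup_irr {L : Type*} [Lattice L] [Fintype L] [BoundedOrder L] (x : L) :
    x ≤ (Finset.univ.filter (fun a : {a : L // JoinIrr a} => a.1 ≤ x)).sup
      (fun a => a.1) := by
  induction x using WellFoundedLT.induction with
  | _ x ih =>
    by_cases hx : x = ⊥
    · simp [hx]
    by_cases hj : JoinIrr x
    · exact Finset.le_sup (f := fun a : {a : L // JoinIrr a} => a.1) (b := ⟨x, hj⟩) (Finset.mem_filter.2 ⟨Finset.mem_univ _, le_rfl⟩)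
    · simp only [JoinIrr, not_and, not_forall, not_not] at hj
      obtain ⟨b, c, hb, hc, hbc⟩ := hj hx
      have hbx := ih b hb
      have hcx := ih c hc
      have mono : ∀ z : L, z < x →
          (Finset.univ.filter (fun a : {a : L // JoinIrr a} => a.1 ≤ z)).sup (fun a => a.1) ≤
          (Finset.univ.filter (fun a : {a : L // JoinIrr a} => a.1 ≤ x)).sup (fun a => a.1) := by
        intro z hz
        apply Finset.sup_mono
        intro a ha
        simp only [Finset.mem_filter, Finset.mem_univ, true_and] at ha ⊢
        exact ha.trans hz.le
      calc x = b ⊔ c := hbc.symm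
        _ ≤ _ := sup_le (hbx.trans (mono b hb)) (hcx.trans (mono c hc))

private lemma psi_le {L : Type*} [Lattice L] [Fintype L] [BoundedOrder L] {x y : L}
    (h : ∀ a : {a : L // JoinIrr a}, a.1 ≤ x → a.1 ≤ y) : x ≤ y := by
  refine (le_sup_irr x).trans (Finset.sup_le ?_)
  intro a ha
  simp only [Finset.mem_filter, Finset.mem_univ, true_and] at ha
  exact h a ha

/-- **Join constraints describe the image of the canonical partial representation.**
A lower closed set `T` of the poset of join-irreducible elements lies in the image
of `ψ : x ↦ {a ∈ X_j : a ≤ x}` iff for all `x, y`, `ψ x ∪ ψ y ⊆ T` implies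
`ψ (x ⊔ y) ⊆ T`; consequently `ψ` is an order isomorphism from `L` onto the family
of such lower closed sets, ordered by inclusion. -/
theorem canonical_partial_representation_image
    (L : Type*) [Lattice L] [Fintype L] [BoundedOrder L] :
    let Xj := {a : L // JoinIrr a}
    let ψ : L → Set Xj := fun x => {a : Xj | a.1 ≤ x}
    (∀ T : Set Xj, IsLowerSet T →
      (T ∈ Set.range ψ ↔ ∀ x y : L, ψ x ∪ ψ y ⊆ T → ψ (x ⊔ y) ⊆ T)) ∧
    Set.range ψ =
      {T : Set Xj | IsLowerSet T ∧ ∀ x y : L, ψ x ∪ ψ y ⊆ T → ψ (x ⊔ y) ⊆ T} ∧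
    (∀ x y : L, x ≤ y ↔ ψ x ⊆ ψ y) := by
  intro Xj ψ
  have hmono : ∀ x y : L, x ≤ y ↔ ψ x ⊆ ψ y := by
    intro x y
    constructor
    · intro h a ha
      exact le_trans ha h
    · intro h
      exact psi_le (fun a ha => h ha)
  have hcond : ∀ x : L, ∀ u v : L, ψ u ∪ ψ v ⊆ ψ x → ψ (u ⊔ v) ⊆ ψ x := by
    intro x u v h
    have hu : u ≤ x := (hmono u x).2 (fun a ha => h (Or.inl ha))
    have hv : v ≤ x := (hmono v x).2 (fun a ha => h (Or.inr ha))
    exact (hmono _ _).1 (sup_le hu hv)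
  have hmain : ∀ T : Set Xj, IsLowerSet T →
      (T ∈ Set.range ψ ↔ ∀ x y : L, ψ x ∪ ψ y ⊆ T → ψ (x ⊔ y) ⊆ T) := by
    intro T hT
    constructor
    · rintro ⟨x, rfl⟩
      exact hcond x
    · intro hC
      classical
      refine ⟨(Finset.univ.filter (fun a : Xj => a ∈ T)).sup (fun a => a.1), ?_⟩
      apply Set.Subset.antisymm
      · -- ψ s ⊆ T
        have key : ∀ (s : Finset Xj), (∀ a ∈ s, a ∈ T) →
            ψ (s.sup (fun a => a.1)) ⊆ T := by
          intro s
          induction s using Finset.induction with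
          | empty =>
            intro _ a ha
            exact absurd (le_bot_iff.1 ha) a.2.1
          | @insert b s' hnot ih =>
            intro hmem
            rw [Finset.sup_insert]
            apply hC
            rintro a (ha | ha)
            · exact hT ha (hmem b (Finset.mem_insert_self b s'))
            · exact ih (fun a h => hmem a (Finset.mem_insert_of_mem h)) ha
        exact key _ (by intro a ha; simpa using ha)
      · intro a ha
        exact Finset.le_sup (f := fun a : Xj => a.1) (by simp [ha])
  refine ⟨hmain, ?_, hmono⟩
  ext T
  simp only [Set.mem_setOf_eq]
  constructor
  · rintro ⟨x, rfl⟩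
    refine ⟨?_, hcond x⟩
    intro a b hab ha
    exact le_trans hab ha
  · rintro ⟨hT, hC⟩
    exact (hmain T hT).2 hC
end

section
/- Let (V, 𝒢) be an antimatroid. For every subset T ⊆ V, T is feasible (T ∈ 𝒢) if and only if for every x ∈ T there exists a path G of (V, 𝒢) whose unique endpoint is x, such that for every path G' of (V, 𝒢) with G' ⊆ G, the unique endpoint of G' belongs to T. -/
/-- `(V, 𝒢)` is an antimatroid: `𝒢` is a nonempty family of subsets of the finite
ground set `V` containing the whole ground set, closed under union, and accessible. -/
def IsAntimatroid {V : Type*} [DecidableEq V] [Fintype V] (𝒢 : Set (Finset V)) : Prop :=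
  𝒢.Nonempty ∧
  (Finset.univ ∈ 𝒢) ∧
  (∀ G₁ ∈ 𝒢, ∀ G₂ ∈ 𝒢, G₁ ∪ G₂ ∈ 𝒢) ∧
  (∀ G ∈ 𝒢, G.Nonempty → ∃ g ∈ G, G.erase g ∈ 𝒢)

/-- An endpoint of a feasible set `G` is an element `g ∈ G` with `G \ {g}` feasible. -/
def IsEndpoint {V : Type*} [DecidableEq V] (𝒢 : Set (Finset V))
    (G : Finset V) (g : V) : Prop :=
  g ∈ G ∧ G.erase g ∈ 𝒢

/-- A path is a feasible set with exactly one endpoint. -/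
def IsPath {V : Type*} [DecidableEq V] (𝒢 : Set (Finset V)) (G : Finset V) : Prop :=
  G ∈ 𝒢 ∧ ∃! g, IsEndpoint 𝒢 G g
lemma antimatroid_empty_mem_aux {V : Type*} [DecidableEq V] [Fintype V]
    {𝒢 : Set (Finset V)} (h : IsAntimatroid 𝒢) :
    ∀ (n : ℕ) (G : Finset V), G.card ≤ n → G ∈ 𝒢 → (∅ : Finset V) ∈ 𝒢 := by
  intro n
  induction n with
  | zero =>
    intro G hc hG
    have : G = ∅ := Finset.card_eq_zero.mp (Nat.le_zero.mp hc)
    rwa [this] at hG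
  | succ n ih =>
    intro G hc hG
    rcases G.eq_empty_or_nonempty with rfl | hne
    · exact hG
    · obtain ⟨g, hg, hGe⟩ := h.2.2.2 G hG hne
      exact ih (G.erase g) (by
        have := Finset.card_erase_of_mem hg
        omega) hGe

lemma antimatroid_empty_mem {V : Type*} [DecidableEq V] [Fintype V]
    {𝒢 : Set (Finset V)} (h : IsAntimatroid 𝒢) : (∅ : Finset V) ∈ 𝒢 := by
  obtain ⟨G, hG⟩ := h.1
  exact antimatroid_empty_mem_aux h G.card G le_rfl hG

lemma antimatroid_path_exists_aux {V : Type*} [DecidableEq V] [Fintype V]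
    {𝒢 : Set (Finset V)} (h : IsAntimatroid 𝒢) :
    ∀ (n : ℕ) (G : Finset V), G.card ≤ n → G ∈ 𝒢 → ∀ x ∈ G,
      ∃ P, IsPath 𝒢 P ∧ IsEndpoint 𝒢 P x ∧ P ⊆ G := by
  intro n
  induction n with
  | zero =>
    intro G hc hG x hx
    have : G = ∅ := Finset.card_eq_zero.mp (Nat.le_zero.mp hc)
    simp [this] at hx
  | succ n ih =>
    intro G hc hG x hx
    by_cases hex : ∃ g, g ≠ x ∧ IsEndpoint 𝒢 G g
    · obtain ⟨g, hgx, hg, hGe⟩ := hex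
      have hcard : (G.erase g).card ≤ n := by
        have := Finset.card_erase_of_mem hg
        omega
      obtain ⟨P, hP, hPx, hPG⟩ := ih (G.erase g) hcard hGe x
        (Finset.mem_erase.mpr ⟨fun hxg => hgx hxg.symm, hx⟩)
      exact ⟨P, hP, hPx, hPG.trans (Finset.erase_subset g G)⟩
    · push_neg at hex
      obtain ⟨g, hg, hGe⟩ := h.2.2.2 G hG ⟨x, hx⟩
      have hgeq : g = x := by
        by_contra hne
        exact hex g hne ⟨hg, hGe⟩
      subst hgeq
      refine ⟨G, ⟨hG, g, ⟨hg, hGe⟩, ?_⟩, ⟨hg, hGe⟩, le_refl G⟩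
      intro y hy
      by_contra hne
      exact (hex y hne) hy

lemma antimatroid_sup_mem {V : Type*} [DecidableEq V] [Fintype V]
    {𝒢 : Set (Finset V)} (h : IsAntimatroid 𝒢)
    (s : Finset V) (f : V → Finset V) (hf : ∀ x ∈ s, f x ∈ 𝒢) :
    s.sup f ∈ 𝒢 := by
  induction s using Finset.induction_on with
  | empty => simpa using antimatroid_empty_mem h
  | @insert a s ha ih =>
    rw [Finset.sup_insert]
    have h1 : f a ∈ 𝒢 := hf a (Finset.mem_insert_self a s)
    have h2 : s.sup f ∈ 𝒢 := ih (fun x hx => hf x (Finset.mem_insert_of_mem hx))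
    exact h.2.2.1 _ h1 _ h2

/-- **Feasibility characterization via paths.** In an antimatroid `(V, 𝒢)`, a set
`T ⊆ V` is feasible iff for every `x ∈ T` there is a path `G` with unique endpoint
`x` such that the unique endpoint of every path contained in `G` belongs to `T`. -/
theorem feasible_iff_paths
    {V : Type*} [DecidableEq V] [Fintype V] (𝒢 : Set (Finset V))
    (h : IsAntimatroid 𝒢) (T : Finset V) :
    T ∈ 𝒢 ↔ ∀ x ∈ T, ∃ G, IsPath 𝒢 G ∧ IsEndpoint 𝒢 G x ∧
      ∀ G', IsPath 𝒢 G' → G' ⊆ G → ∀ y, IsEndpoint 𝒢 G' y → y ∈ T := by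
  constructor
  · intro hT x hx
    obtain ⟨P, hP, hPx, hPT⟩ :=
      antimatroid_path_exists_aux h T.card T le_rfl hT x hx
    exact ⟨P, hP, hPx, fun G' hG' hsub y hy => hPT (hsub hy.1)⟩
  · intro hyp
    classical
    choose! f hf1 hf2 hf3 using hyp
    have hfmem : ∀ x ∈ T, f x ∈ 𝒢 := fun x hx => (hf1 x hx).1
    have hfsubT : ∀ x ∈ T, f x ⊆ T := by
      intro x hx y hy
      obtain ⟨P, hP, hPy, hPf⟩ :=
        antimatroid_path_exists_aux h (f x).card (f x) le_rfl (hfmem x hx) y hy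
      exact hf3 x hx P hP hPf y hPy
    have hTeq : T = T.sup f := by
      apply Finset.Subset.antisymm
      · intro x hx
        exact Finset.mem_sup.mpr ⟨x, hx, (hf2 x hx).1⟩
      · intro y hy
        obtain ⟨x, hx, hyx⟩ := Finset.mem_sup.mp hy
        exact hfsubT x hx hyx
    rw [hTeq]
    exact antimatroid_sup_mem h T f hfmem
end

section
/- Let (V, E) be a finite simple graph, let 𝒢 be the family of subsets S of V ⊎ E such that every edge in S ∩ E has at least one endpoint in S, and let w(v) = 1 − deg(v) for v ∈ V and w(e) = 1 for e ∈ E, extended additively to sets. Then for every S ∈ 𝒢 there exists an independent set U ⊆ V with |U| ≥ w(S). -/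
/-- `S` is feasible: every edge in `S` has at least one of its endpoints in `S`.
The ground set is the disjoint union `V ⊕ E` of vertices and edges. -/
def GraphFeasible {V : Type*} [Fintype V] [DecidableEq V] (G : SimpleGraph V)
    (S : Finset (V ⊕ G.edgeSet)) : Prop :=
  ∀ e : G.edgeSet, Sum.inr e ∈ S → ∃ v ∈ (e : Sym2 V), Sum.inl v ∈ S

/-- The weight function: `w(v) = 1 - deg v` on vertices, `w(e) = 1` on edges. -/
def graphWeight {V : Type*} [Fintype V] [DecidableEq V] (G : SimpleGraph V)
    [DecidableRel G.Adj] : V ⊕ G.edgeSet → ℤ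
  | Sum.inl v => 1 - G.degree v
  | Sum.inr _ => 1

/-- `U` is an independent set of vertices. -/
def IndepSet {V : Type*} (G : SimpleGraph V) (U : Finset V) : Prop :=
  ∀ u ∈ U, ∀ v ∈ U, ¬ G.Adj u v


open Finset

namespace SimpleGraph

variable {V : Type*} [DecidableEq V] (G : SimpleGraph V)

theorem exists_indepSet_subset_card_sub_le [Fintype V] [DecidableRel G.Adj] (A : Finset V) :
    ∃ U ⊆ A, IndepSet G U ∧ (#A : ℤ) - #(G.edgeFinset ∩ A.sym2) ≤ #U := by
  set B := (G.edgeFinset ∩ A.sym2).image fun e : Sym2 V => e.out.1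
  refine ⟨A \ B, sdiff_subset, ?_, ?_⟩
  · intro u hu v hv huv
    have hmem : s(u, v) ∈ G.edgeFinset ∩ A.sym2 := by
      simp_all [Finset.mem_sym2_iff]
    have hout : s(u, v).out.1 ∈ B := mem_image_of_mem _ hmem
    rcases Sym2.mem_iff.mp (Sym2.out_fst_mem s(u, v)) with h | h <;> rw [h] at hout
    exacts [(mem_sdiff.mp hu).2 hout, (mem_sdiff.mp hv).2 hout]
  · have hB : #B ≤ #(G.edgeFinset ∩ A.sym2) := card_image_le
    have := le_card_sdiff B A
    omega

theorem ite_mem_add_ite_mem_sym2_le_card_filter_mem (A : Finset V) (F : Finset (Sym2 V))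
    {e : Sym2 V} (he : ¬ e.IsDiag) (hF : ∀ e ∈ F, ∃ v ∈ e, v ∈ A) :
    (if e ∈ F then 1 else 0) + (if e ∈ A.sym2 then 1 else 0) ≤ #{v ∈ A | v ∈ e} := by
  induction e with | h x y => ?_
  have hxy : x ≠ y := he
  by_cases hin : s(x, y) ∈ A.sym2
  · have hx : x ∈ A := mem_sym2_iff.mp hin x (Sym2.mem_mk_left x y)
    have hy : y ∈ A := mem_sym2_iff.mp hin y (Sym2.mem_mk_right x y)
    have : ({x, y} : Finset V) ⊆ {v ∈ A | v ∈ s(x, y)} := by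
      intro v hv
      rcases mem_insert.mp hv with rfl | hv
      · simp [hx]
      · rw [mem_singleton.mp hv]; simp [hy]
    have := card_le_card this
    rw [card_pair hxy] at this
    split_ifs <;> omega
  · rw [if_neg hin]
    split_ifs with hF'
    · obtain ⟨v, hve, hvA⟩ := hF _ hF'
      exact card_pos.mpr ⟨v, mem_filter.mpr ⟨hvA, hve⟩⟩
    · exact Nat.zero_le _

theorem card_add_card_inter_sym2_le_sum_degree [Fintype V] [DecidableRel G.Adj]
    (A : Finset V) (F : Finset (Sym2 V)) (hFE : F ⊆ G.edgeFinset)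
    (hFA : ∀ e ∈ F, ∃ v ∈ e, v ∈ A) :
    #F + #(G.edgeFinset ∩ A.sym2) ≤ ∑ v ∈ A, G.degree v := by
  have hdeg : ∑ v ∈ A, G.degree v = ∑ e ∈ G.edgeFinset, #{v ∈ A | v ∈ e} := by
    simp_rw [← card_incidenceFinset_eq_degree, incidenceFinset_eq_filter]
    exact sum_card_bipartiteAbove_eq_sum_card_bipartiteBelow _
  have hcount : #F + #(G.edgeFinset ∩ A.sym2) = ∑ e ∈ G.edgeFinset,
      ((if e ∈ F then 1 else 0) + (if e ∈ A.sym2 then 1 else 0)) := by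
    rw [sum_add_distrib, sum_boole, sum_boole, filter_mem_eq_inter, filter_mem_eq_inter,
      inter_eq_right.mpr hFE]
    rfl
  rw [hdeg, hcount]
  exact sum_le_sum fun e he =>
    ite_mem_add_ite_mem_sym2_le_card_filter_mem A F (G.not_isDiag_of_mem_edgeSet
      (mem_edgeFinset.mp he)) hFA

theorem sum_graphWeight_eq [Fintype V] [DecidableRel G.Adj] (S : Finset (V ⊕ G.edgeSet)) :
    ∑ x ∈ S, graphWeight G x = #S.toLeft - ∑ v ∈ S.toLeft, (G.degree v : ℤ) + #S.toRight := by
  conv_lhs => rw [← toLeft_disjSum_toRight (u := S)]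
  simp [sum_disjSum, graphWeight, sum_sub_distrib]

end SimpleGraph

/-- **Feasible sets are dominated by independent sets.** For every feasible set `S`
there is an independent set `U` with `|U| ≥ w(S)`. -/
theorem feasible_set_dominated_by_indep_set
    {V : Type*} [Fintype V] [DecidableEq V] (G : SimpleGraph V) [DecidableRel G.Adj]
    (S : Finset (V ⊕ G.edgeSet)) (hS : GraphFeasible G S) :
    ∃ U : Finset V, IndepSet G U ∧ ∑ x ∈ S, graphWeight G x ≤ (U.card : ℤ) := by
  set A := S.toLeft
  set F := S.toRight.map (Function.Embedding.subtype (· ∈ G.edgeSet))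
  have hFE : F ⊆ G.edgeFinset := fun _ he => by
    obtain ⟨e, -, rfl⟩ := mem_map.mp he
    exact SimpleGraph.mem_edgeFinset.mpr e.2
  have hFA : ∀ e ∈ F, ∃ v ∈ e, v ∈ A := fun _ he => by
    obtain ⟨e, heS, rfl⟩ := mem_map.mp he
    obtain ⟨v, hve, hvS⟩ := hS e (mem_toRight.mp heS)
    exact ⟨v, hve, mem_toLeft.mpr hvS⟩
  have hdeg := G.card_add_card_inter_sym2_le_sum_degree A F hFE hFA
  obtain ⟨U, -, hU, hUcard⟩ := G.exists_indepSet_subset_card_sub_le A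
  refine ⟨U, hU, ?_⟩
  rw [G.sum_graphWeight_eq, ← card_map (Function.Embedding.subtype (· ∈ G.edgeSet))]
  zify at hdeg
  linarith
end

section
/- Let (V, E) be a finite simple graph, let 𝒢 be the family of subsets S of V ⊎ E such that every edge in S ∩ E has at least one endpoint in S, and let w(v) = 1 − deg(v) for v ∈ V and w(e) = 1 for e ∈ E, extended additively to sets. Then the maximum of w(S) over S ∈ 𝒢 equals the maximum cardinality of an independent set of (V, E). -/
/-!
For a feasible `S` with vertex part `A`, double counting incidences gives
`∑ v ∈ A, deg v = #(edges meeting A) + #(edges inside A)`, and all edges of `S` meet `A`,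
so `w(S) ≤ |A| - #(edges inside A)`. Deleting one endpoint of each edge inside `A` leaves an
independent set, so this is at most the independence number. Conversely, every edge meeting an
independent set `U` has exactly one endpoint in `U`, so `U` together with all edges meeting it
has weight exactly `|U|`.
-/

open Finset

namespace SimpleGraph

variable {V : Type*} [Fintype V] [DecidableEq V] {G : SimpleGraph V} [DecidableRel G.Adj]

variable (G) in
open scoped Classical in
noncomputable def edgesMeeting (A : Finset V) : Finset G.edgeSet :=
  {e | ∃ v ∈ (e : Sym2 V), v ∈ A}

variable (G) in
open scoped Classical in
noncomputable def edgesWithin (A : Finset V) : Finset G.edgeSet :=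
  {e | ∀ v ∈ (e : Sym2 V), v ∈ A}

@[simp]
lemma mem_edgesMeeting {A : Finset V} {e : G.edgeSet} :
    e ∈ G.edgesMeeting A ↔ ∃ v ∈ (e : Sym2 V), v ∈ A := by
  simp [edgesMeeting]

@[simp]
lemma mem_edgesWithin {A : Finset V} {e : G.edgeSet} :
    e ∈ G.edgesWithin A ↔ ∀ v ∈ (e : Sym2 V), v ∈ A := by
  simp [edgesWithin]

lemma edgesWithin_mono {A B : Finset V} (h : A ⊆ B) : G.edgesWithin A ⊆ G.edgesWithin B :=
  fun _ he => mem_edgesWithin.mpr fun v hv => h (mem_edgesWithin.mp he v hv)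

lemma indepSet_iff_edgesWithin_eq_empty {A : Finset V} :
    IndepSet G A ↔ G.edgesWithin A = ∅ := by
  simp only [IndepSet, eq_empty_iff_forall_notMem, mem_edgesWithin, Subtype.forall,
    Sym2.forall, mem_edgeSet, Sym2.mem_iff, forall_eq_or_imp, forall_eq]
  exact ⟨fun h a b hab ⟨ha, hb⟩ => h a ha b hb hab, fun h a ha b hb hab => h a b hab ⟨ha, hb⟩⟩

lemma degree_eq_card_filter_mem (v : V) : G.degree v = #{e : G.edgeSet | v ∈ (e : Sym2 V)} := by
  rw [← card_incidenceSet_eq_degree, ← Fintype.card_subtype]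
  exact Fintype.card_congr
    ⟨fun y => ⟨⟨y.1, y.2.1⟩, y.2.2⟩, fun x => ⟨x.1.1, x.1.2, x.2⟩, fun _ => rfl, fun _ => rfl⟩

lemma card_filter_mem_edge (A : Finset V) (e : G.edgeSet) :
    #{v ∈ A | v ∈ (e : Sym2 V)} =
      (if e ∈ G.edgesMeeting A then 1 else 0) + (if e ∈ G.edgesWithin A then 1 else 0) := by
  obtain ⟨e, he⟩ := e
  induction e using Sym2.ind with
  | _ a b =>
  have hab : a ≠ b := (mem_edgeSet G).mp he |>.ne
  simp only [mem_edgesMeeting, mem_edgesWithin, Sym2.mem_iff, filter_or, filter_eq']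
  rw [card_union_of_disjoint (by split_ifs <;> simp [hab])]
  by_cases ha : a ∈ A <;> by_cases hb : b ∈ A <;> simp [ha, hb]

variable (G) in
theorem sum_degree_eq_card_edgesMeeting_add_card_edgesWithin (A : Finset V) :
    ∑ v ∈ A, G.degree v = #(G.edgesMeeting A) + #(G.edgesWithin A) := by
  simp_rw [degree_eq_card_filter_mem, card_filter]
  rw [sum_comm]
  simp_rw [← card_filter, card_filter_mem_edge, sum_add_distrib, sum_boole, filter_mem_eq_inter,
    univ_inter, Nat.cast_id]

variable (G) in
theorem exists_indepSet_card_le_add_card_edgesWithin (A : Finset V) :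
    ∃ U, IndepSet G U ∧ #A ≤ #U + #(G.edgesWithin A) := by
  induction A using Finset.strongInduction with
  | H A ih =>
  by_cases hA : G.edgesWithin A = ∅
  · exact ⟨A, indepSet_iff_edgesWithin_eq_empty.mpr hA, le_self_add⟩
  obtain ⟨e, he⟩ := nonempty_iff_ne_empty.mpr hA
  obtain ⟨a, hae⟩ : ∃ a, a ∈ (e : Sym2 V) := ⟨_, Sym2.out_fst_mem _⟩
  have haA : a ∈ A := mem_edgesWithin.mp he a hae
  obtain ⟨U, hU, hcard⟩ := ih (A.erase a) (erase_ssubset haA)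
  have hlt : #(G.edgesWithin (A.erase a)) < #(G.edgesWithin A) := by
    refine card_lt_card <| (ssubset_iff_of_subset (edgesWithin_mono (erase_subset a A))).mpr
      ⟨e, he, fun he' => ?_⟩
    exact notMem_erase a A (mem_edgesWithin.mp he' a hae)
  exact ⟨U, hU, by have := card_erase_add_one haA; omega⟩

end SimpleGraph

open SimpleGraph

section GraphWeight

variable {V : Type*} [Fintype V] [DecidableEq V] {G : SimpleGraph V} [DecidableRel G.Adj]

lemma sum_graphWeight (S : Finset (V ⊕ G.edgeSet)) :
    ∑ x ∈ S, graphWeight G x =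
      #S.toLeft - ∑ v ∈ S.toLeft, (G.degree v : ℤ) + #S.toRight := by
  simp [sum_sum_eq_sum_toLeft_add_sum_toRight, graphWeight, sum_sub_distrib]

lemma graphFeasible_iff_toRight_subset {S : Finset (V ⊕ G.edgeSet)} :
    GraphFeasible G S ↔ S.toRight ⊆ G.edgesMeeting S.toLeft := by
  simp [GraphFeasible, subset_iff]

theorem sum_graphWeight_le_card_sub_card_edgesWithin {S : Finset (V ⊕ G.edgeSet)}
    (hS : GraphFeasible G S) :
    ∑ x ∈ S, graphWeight G x ≤ #S.toLeft - #(G.edgesWithin S.toLeft) := by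
  have hB := card_le_card (graphFeasible_iff_toRight_subset.mp hS)
  have hdeg := sum_degree_eq_card_edgesMeeting_add_card_edgesWithin G S.toLeft
  rw [sum_graphWeight]
  zify at hB hdeg
  linarith

theorem sum_graphWeight_disjSum_edgesMeeting {U : Finset V} (hU : IndepSet G U) :
    ∑ x ∈ U.disjSum (G.edgesMeeting U), graphWeight G x = #U := by
  have hdeg := sum_degree_eq_card_edgesMeeting_add_card_edgesWithin G U
  rw [indepSet_iff_edgesWithin_eq_empty.mp hU, card_empty, add_zero] at hdeg
  rw [sum_graphWeight, toLeft_disjSum, toRight_disjSum]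
  zify at hdeg
  linarith

end GraphWeight

/-- **Max weight feasible set equals max independent set.** The maximum of `w(S)`
over feasible sets `S` equals the maximum cardinality of an independent set:
there are a weight-maximizing feasible set and a maximum independent set whose
values coincide. -/
theorem max_weight_feasible_eq_max_indep
    {V : Type*} [Fintype V] [DecidableEq V] (G : SimpleGraph V) [DecidableRel G.Adj] :
    ∃ S : Finset (V ⊕ G.edgeSet), GraphFeasible G S ∧
      ∃ U : Finset V, IndepSet G U ∧
        ∑ x ∈ S, graphWeight G x = (U.card : ℤ) ∧
        (∀ S' : Finset (V ⊕ G.edgeSet), GraphFeasible G S' →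
          ∑ x ∈ S', graphWeight G x ≤ ∑ x ∈ S, graphWeight G x) ∧
        (∀ U' : Finset V, IndepSet G U' → U'.card ≤ U.card) := by
  classical
  obtain ⟨U, hU, hUmax⟩ : ∃ U, IndepSet G U ∧ ∀ U', IndepSet G U' → #U' ≤ #U := by
    obtain ⟨U, hU, hmax⟩ := exists_max_image {U : Finset V | IndepSet G U} card
      ⟨∅, mem_filter.mpr ⟨mem_univ _, by simp [IndepSet]⟩⟩
    exact ⟨U, (mem_filter.mp hU).2, fun U' hU' => hmax U' (by simpa using hU')⟩
  have hweight := sum_graphWeight_disjSum_edgesMeeting hU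
  refine ⟨U.disjSum (G.edgesMeeting U), graphFeasible_iff_toRight_subset.mpr (by simp),
    U, hU, hweight, fun S' hS' => ?_, hUmax⟩
  obtain ⟨U', hU', hcard⟩ := exists_indepSet_card_le_add_card_edgesWithin G S'.toLeft
  calc ∑ x ∈ S', graphWeight G x ≤ #S'.toLeft - #(G.edgesWithin S'.toLeft) :=
        sum_graphWeight_le_card_sub_card_edgesWithin hS'
    _ ≤ #U' := by omega
    _ ≤ #U := by exact_mod_cast hUmax U' hU'
    _ = _ := hweight.symm
end

section
/- Let (V, 𝒢) be an antimatroid, let G ∈ 𝒢 be a feasible set, and let g ∈ G. Then there exists a path G' of (V, 𝒢) with G' ⊆ G such that g is the unique endpoint of G'. -/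
/-- **Path subsets realize all elements as endpoints.** For every feasible set `G`
of an antimatroid and every `g ∈ G`, there is a path `G' ⊆ G` whose unique
endpoint is `g`. -/
theorem exists_path_subset_with_endpoint
    {V : Type*} [DecidableEq V] [Fintype V] (𝒢 : Set (Finset V))
    (h : IsAntimatroid 𝒢) (G : Finset V) (hG : G ∈ 𝒢) (g : V) (hg : g ∈ G) :
    ∃ G', IsPath 𝒢 G' ∧ G' ⊆ G ∧ IsEndpoint 𝒢 G' g := by
  obtain ⟨-, -, -, hacc⟩ := h
  suffices H : ∀ n (G : Finset V), G.card ≤ n → G ∈ 𝒢 → ∀ g ∈ G,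
      ∃ G', IsPath 𝒢 G' ∧ G' ⊆ G ∧ IsEndpoint 𝒢 G' g from
    H G.card G le_rfl hG g hg
  intro n
  induction n with
  | zero =>
    intro G hcard hG g hg
    simp only [Nat.le_zero, Finset.card_eq_zero] at hcard
    subst hcard
    exact absurd hg (Finset.notMem_empty g)
  | succ n ih =>
    intro G hcard hG g hg
    by_cases hall : ∀ e, IsEndpoint 𝒢 G e → e = g
    · obtain ⟨e, he, hee⟩ := hacc G hG ⟨g, hg⟩
      have heg : e = g := hall e ⟨he, hee⟩
      subst heg
      exact ⟨G, ⟨hG, e, ⟨he, hee⟩, hall⟩, subset_rfl, ⟨he, hee⟩⟩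
    · push_neg at hall
      obtain ⟨e, ⟨heG, he⟩, hne⟩ := hall
      have hg' : g ∈ G.erase e := Finset.mem_erase.2 ⟨Ne.symm hne, hg⟩
      have hc : (G.erase e).card ≤ n := by
        have := Finset.card_erase_of_mem heG
        omega
      obtain ⟨G', hP, hsub, hend⟩ := ih (G.erase e) hc he g hg'
      exact ⟨G', hP, hsub.trans (Finset.erase_subset _ _), hend⟩
end

section
/- Let (V, 𝒢) be an antimatroid. Then: (i) every feasible set G ∈ 𝒢 equals the union of all paths of (V, 𝒢) contained in G; and (ii) for any collection Q' of paths of (V, 𝒢), the union ⋃ Q' is a feasible set of (V, 𝒢). -/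
/-- **Feasible sets are unions of paths.** In an antimatroid: (i) every feasible set
equals the union of all paths contained in it; (ii) the union of any collection of
paths is feasible. -/
theorem feasible_sets_are_unions_of_paths
    {V : Type*} [DecidableEq V] [Fintype V] (𝒢 : Set (Finset V))
    (h : IsAntimatroid 𝒢) :
    (∀ G ∈ 𝒢, ∀ x, x ∈ G ↔ ∃ G', IsPath 𝒢 G' ∧ G' ⊆ G ∧ x ∈ G') ∧
    (∀ Q' : Finset (Finset V), (∀ G ∈ Q', IsPath 𝒢 G) → Q'.sup id ∈ 𝒢) := by
  classical
  obtain ⟨hne, huniv, hunion, hacc⟩ := h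
  have hempty : ∅ ∈ 𝒢 := by
    obtain ⟨G, hG⟩ := hne
    have key : ∀ n (G : Finset V), G ∈ 𝒢 → G.card ≤ n → (∅ : Finset V) ∈ 𝒢 := by
      intro n
      induction n with
      | zero =>
        intro G hG hc
        have : G = ∅ := Finset.card_eq_zero.mp (Nat.le_zero.mp hc)
        rwa [this] at hG
      | succ n ih =>
        intro G hG hc
        rcases G.eq_empty_or_nonempty with rfl | hGne
        · exact hG
        · obtain ⟨g, hgG, hGg⟩ := hacc G hG hGne
          refine ih _ hGg ?_
          have := Finset.card_erase_of_mem hgG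
          omega
    exact key G.card G hG le_rfl
  constructor
  · intro G hG x
    constructor
    · intro hx
      set S := G.powerset.filter (fun H => H ∈ 𝒢 ∧ x ∈ H) with hSdef
      have hGS : G ∈ S := by
        simp [hSdef, hG, hx]
      obtain ⟨H, hHS, hmin⟩ := S.exists_min_image Finset.card ⟨G, hGS⟩
      simp only [hSdef, Finset.mem_filter, Finset.mem_powerset] at hHS
      obtain ⟨hHG, hH𝒢, hxH⟩ := hHS
      have hend : ∀ g, IsEndpoint 𝒢 H g → g = x := by
        rintro g ⟨hgH, hHg⟩
        by_contra hgx
        have hmem : H.erase g ∈ S := by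
          simp only [hSdef, Finset.mem_filter, Finset.mem_powerset]
          exact ⟨(Finset.erase_subset _ _).trans hHG, hHg,
            Finset.mem_erase.mpr ⟨fun e => hgx e.symm, hxH⟩⟩
        have h1 := hmin _ hmem
        have h2 := Finset.card_erase_of_mem hgH
        have h3 : 0 < H.card := Finset.card_pos.mpr ⟨x, hxH⟩
        omega
      obtain ⟨g, hgH, hHg⟩ := hacc H hH𝒢 ⟨x, hxH⟩
      have hgx : g = x := hend g ⟨hgH, hHg⟩
      subst hgx
      exact ⟨H, ⟨hH𝒢, g, ⟨hgH, hHg⟩, fun y hy => hend y hy⟩, hHG, hxH⟩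
    · rintro ⟨G', _, hsub, hxG'⟩
      exact hsub hxG'
  · intro Q' hQ'
    induction Q' using Finset.induction_on with
    | empty => simpa using hempty
    | @insert a s _ ih =>
      rw [Finset.sup_insert]
      exact hunion _ (hQ' a (Finset.mem_insert_self a s)).1 _
        (ih fun G hG => hQ' G (Finset.mem_insert_of_mem hG))
end

section
/- Let I = (F, W, (C_f)_{f∈F}, (C_w)_{w∈W}) be a matching market instance in which every choice function is substitutable and consistent, and let S be its set of stable matchings. Then: (i) S is nonempty; (ii) the relation ⪰ defined by μ ⪰ μ' iff C_f(μ(f) ∪ μ'(f)) = μ(f) for all f ∈ F is a partial order on S; (iii) every pair μ, μ' ∈ S has a least upper bound and a greatest lower bound in (S, ⪰); and (iv) there exist a firm-optimal stable matching μ_F and a worker-optimal stable matching μ_W in S such that μ_F ⪰ μ ⪰ μ_W for all μ ∈ S. -/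
open Finset

/-!
Following Fleiner and Hatfield–Milgrom, consider the map on sets of contracts `A ⊆ F × W`
sending `A` to the contracts that workers do not reject from the contracts that firms do not
reject from `A`. Substitutability makes rejection monotone, so this map is monotone and, by
Knaster–Tarski, its fixed points form a complete lattice. Taking firms' choices `A ↦ C_F(A)`
sends fixed points onto stable matchings, monotonically for `⪰`; conversely every stable
matching `μ` is `C_F(A_μ)` for the fixed point `A_μ` of contracts that belong to `μ` or that
firms would not take up given `μ`, and `μ ⪰ μ'` forces `A_μ' ⊆ A_μ`. So the stable matchings
with `⪰` form a retract of that lattice, and inherit joins, meets, a top and a bottom.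
-/

open Finset

section OrderRetract

variable {α L : Type*} [Lattice L]

/-- `R x y` reads `x ⪰ y`, so both maps are monotone. -/
structure IsOrderRetract (S : α → Prop) (R : α → α → Prop) (s : Subtype S → L) (r : L → α) :
    Prop where
  retract_mem : ∀ p, S (r p)
  retract_section : ∀ x : Subtype S, r (s x) = x
  section_mono : ∀ x y : Subtype S, R x y → s y ≤ s x
  retract_mono : ∀ {p q}, p ≤ q → R (r q) (r p)

namespace IsOrderRetract

variable {S : α → Prop} {R : α → α → Prop} {s : Subtype S → L} {r : L → α}
  (h : IsOrderRetract S R s r) {x y z : α}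

include h

theorem rel_retract_of_le (hx : S x) {p : L} (hp : s ⟨x, hx⟩ ≤ p) : R (r p) x := by
  simpa only [h.retract_section] using h.retract_mono hp

theorem rel_retract_of_ge (hx : S x) {p : L} (hp : p ≤ s ⟨x, hx⟩) : R x (r p) := by
  simpa only [h.retract_section] using h.retract_mono hp

theorem rel_iff (hx : S x) (hy : S y) : R x y ↔ s ⟨y, hy⟩ ≤ s ⟨x, hx⟩ :=
  ⟨h.section_mono ⟨x, hx⟩ ⟨y, hy⟩, fun hle => by
    simpa only [h.retract_section] using h.rel_retract_of_le hy hle⟩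

theorem refl (hx : S x) : R x x :=
  (h.rel_iff hx hx).2 le_rfl

theorem antisymm (hx : S x) (hy : S y) (hxy : R x y) (hyx : R y x) : x = y := by
  have hs := le_antisymm ((h.rel_iff hy hx).1 hyx) ((h.rel_iff hx hy).1 hxy)
  simpa only [h.retract_section] using congrArg r hs

theorem trans (hx : S x) (hy : S y) (hz : S z) (hxy : R x y) (hyz : R y z) : R x z :=
  (h.rel_iff hx hz).2 (((h.rel_iff hy hz).1 hyz).trans ((h.rel_iff hx hy).1 hxy))

theorem exists_lub (hx : S x) (hy : S y) :
    ∃ z, S z ∧ R z x ∧ R z y ∧ ∀ l, S l → R l x → R l y → R l z :=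
  ⟨r (s ⟨x, hx⟩ ⊔ s ⟨y, hy⟩), h.retract_mem _, h.rel_retract_of_le hx le_sup_left,
    h.rel_retract_of_le hy le_sup_right, fun _ hl hlx hly =>
      h.rel_retract_of_ge hl (sup_le ((h.rel_iff hl hx).1 hlx) ((h.rel_iff hl hy).1 hly))⟩

theorem exists_glb (hx : S x) (hy : S y) :
    ∃ z, S z ∧ R x z ∧ R y z ∧ ∀ l, S l → R x l → R y l → R z l :=
  ⟨r (s ⟨x, hx⟩ ⊓ s ⟨y, hy⟩), h.retract_mem _, h.rel_retract_of_ge hx inf_le_left,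
    h.rel_retract_of_ge hy inf_le_right, fun _ hl hxl hyl =>
      h.rel_retract_of_le hl (le_inf ((h.rel_iff hx hl).1 hxl) ((h.rel_iff hy hl).1 hyl))⟩

theorem exists_greatest [BoundedOrder L] : ∃ z, S z ∧ ∀ x, S x → R z x :=
  ⟨r ⊤, h.retract_mem ⊤, fun _ hx => h.rel_retract_of_le hx le_top⟩

theorem exists_least [BoundedOrder L] : ∃ z, S z ∧ ∀ x, S x → R x z :=
  ⟨r ⊥, h.retract_mem ⊥, fun _ hx => h.rel_retract_of_ge hx bot_le⟩

end IsOrderRetract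

end OrderRetract

section ChoiceFunction

variable {α : Type*} {C : Finset α → Finset α}

theorem Consistent.choice_idem (hc : Consistent C) (hsub : ∀ S, C S ⊆ S) (S : Finset α) :
    C (C S) = C S :=
  hc S (C S) subset_rfl (hsub S)

variable [DecidableEq α]

theorem Substitutable.mem_of_subset (hs : Substitutable C) {S T : Finset α} {a : α}
    (hTS : T ⊆ S) (haT : a ∈ T) (ha : a ∈ C S) : a ∈ C T := by
  simpa only [insert_eq_of_mem haT] using hs S T a hTS ha

theorem Substitutable.sdiff_mono (hs : Substitutable C) {S T : Finset α} (hTS : T ⊆ S) :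
    T \ C T ⊆ S \ C S := by
  intro a ha
  obtain ⟨haT, haC⟩ := mem_sdiff.1 ha
  exact mem_sdiff.2 ⟨hTS haT, fun haS => haC (hs.mem_of_subset hTS haT haS)⟩

theorem Consistent.notMem_insert_choice (hc : Consistent C) (hsub : ∀ S, C S ⊆ S)
    {S : Finset α} {a : α} (haS : a ∈ S) (ha : a ∉ C S) : a ∉ C (insert a (C S)) := by
  rwa [hc S _ (subset_insert _ _) (insert_subset haS (hsub S))]

theorem choice_union_choice (hsub : ∀ S, C S ⊆ S) (hs : Substitutable C) (hc : Consistent C)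
    (Y X : Finset α) : C (Y ∪ C X) = C (Y ∪ X) := by
  refine hc _ _ (fun a ha => ?_) (union_subset_union_right (hsub X))
  by_cases haY : a ∈ Y
  · exact mem_union_left _ haY
  · have haX : a ∈ X := (mem_union.1 (hsub _ ha)).resolve_left haY
    exact mem_union_right _ (hs.mem_of_subset subset_union_right haX ha)

theorem choice_eq_of_forall_notMem_insert (hsub : ∀ S, C S ⊆ S) (hs : Substitutable C)
    (hc : Consistent C) {M S : Finset α} (hMS : M ⊆ S) (hM : C M = M)
    (hrej : ∀ a ∈ S, a ∉ M → a ∉ C (insert a M)) : C S = M := by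
  have hCS : C S ⊆ M := fun a ha => by
    by_contra haM
    exact hrej a (hsub S ha) haM (hs S M a hMS ha)
  rw [← hc S M hCS hMS, hM]

end ChoiceFunction

section Market

variable {F W : Type*} [DecidableEq F] [DecidableEq W]
  {Cf : F → Finset W → Finset W} {Cw : W → Finset F → Finset F}

@[simp]
theorem mem_matchedW {μ : Finset (F × W)} {f : F} {w : W} : w ∈ matchedW μ f ↔ (f, w) ∈ μ := by
  simp [matchedW]

@[simp]
theorem mem_matchedF {μ : Finset (F × W)} {f : F} {w : W} : f ∈ matchedF μ w ↔ (f, w) ∈ μ := by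
  simp [matchedF]

theorem matchedW_mono {μ μ' : Finset (F × W)} (h : μ ⊆ μ') (f : F) :
    matchedW μ f ⊆ matchedW μ' f := fun _ hw => mem_matchedW.2 (h (mem_matchedW.1 hw))

theorem matchedF_mono {μ μ' : Finset (F × W)} (h : μ ⊆ μ') (w : W) :
    matchedF μ w ⊆ matchedF μ' w := fun _ hf => mem_matchedF.2 (h (mem_matchedF.1 hf))

variable (Cf) in
def chooseF (A : Finset (F × W)) : Finset (F × W) :=
  A.filter fun q => q.2 ∈ Cf q.1 (matchedW A q.1)

variable (Cw) in
def chooseW (B : Finset (F × W)) : Finset (F × W) :=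
  B.filter fun q => q.1 ∈ Cw q.2 (matchedF B q.2)

theorem mem_chooseF {A : Finset (F × W)} {f : F} {w : W} :
    (f, w) ∈ chooseF Cf A ↔ (f, w) ∈ A ∧ w ∈ Cf f (matchedW A f) :=
  mem_filter

theorem mem_chooseW {B : Finset (F × W)} {f : F} {w : W} :
    (f, w) ∈ chooseW Cw B ↔ (f, w) ∈ B ∧ f ∈ Cw w (matchedF B w) :=
  mem_filter

theorem matchedW_chooseF (hfsub : ∀ f S, Cf f S ⊆ S) (A : Finset (F × W)) (f : F) :
    matchedW (chooseF Cf A) f = Cf f (matchedW A f) := by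
  ext w
  rw [mem_matchedW, mem_chooseF, and_iff_right_of_imp fun hw => mem_matchedW.1 (hfsub f _ hw)]

theorem matchedF_chooseW (hwsub : ∀ w S, Cw w S ⊆ S) (B : Finset (F × W)) (w : W) :
    matchedF (chooseW Cw B) w = Cw w (matchedF B w) := by
  ext f
  rw [mem_matchedF, mem_chooseW, and_iff_right_of_imp fun hf => mem_matchedF.1 (hwsub w _ hf)]

theorem mem_sdiff_chooseF {A : Finset (F × W)} {f : F} {w : W} :
    (f, w) ∈ A \ chooseF Cf A ↔ w ∈ matchedW A f \ Cf f (matchedW A f) := by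
  rw [mem_sdiff, mem_chooseF, mem_sdiff, mem_matchedW]
  tauto

theorem mem_sdiff_chooseW {B : Finset (F × W)} {f : F} {w : W} :
    (f, w) ∈ B \ chooseW Cw B ↔ f ∈ matchedF B w \ Cw w (matchedF B w) := by
  rw [mem_sdiff, mem_chooseW, mem_sdiff, mem_matchedF]
  tauto

theorem sdiff_chooseF_mono (hfs : ∀ f, Substitutable (Cf f)) {A A' : Finset (F × W)}
    (h : A ⊆ A') : A \ chooseF Cf A ⊆ A' \ chooseF Cf A' := by
  rintro ⟨f, w⟩
  simpa only [mem_sdiff_chooseF] using fun hw => (hfs f).sdiff_mono (matchedW_mono h f) hw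

theorem sdiff_chooseW_mono (hws : ∀ w, Substitutable (Cw w)) {B B' : Finset (F × W)}
    (h : B ⊆ B') : B \ chooseW Cw B ⊆ B' \ chooseW Cw B' := by
  rintro ⟨f, w⟩
  simpa only [mem_sdiff_chooseW] using fun hf => (hws w).sdiff_mono (matchedF_mono h w) hf

theorem firmGE_chooseF_of_subset (hfsub : ∀ f S, Cf f S ⊆ S) (hfc : ∀ f, Consistent (Cf f))
    {A A' : Finset (F × W)} (h : A ⊆ A') : FirmGE Cf (chooseF Cf A') (chooseF Cf A) := by
  intro f
  rw [matchedW_chooseF hfsub, matchedW_chooseF hfsub]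
  exact hfc f _ _ subset_union_left
    (union_subset (hfsub f _) ((hfsub f _).trans (matchedW_mono h f)))

end Market

section FixedPoints

variable {F W : Type*} [Fintype F] [Fintype W] [DecidableEq F] [DecidableEq W]
  {Cf : F → Finset W → Finset W} {Cw : W → Finset F → Finset F}

variable (Cf) in
def notRejectedF (A : Finset (F × W)) : Finset (F × W) :=
  univ \ (A \ chooseF Cf A)

variable (Cw) in
def notRejectedW (B : Finset (F × W)) : Finset (F × W) :=
  univ \ (B \ chooseW Cw B)

theorem antitone_notRejectedF (hfs : ∀ f, Substitutable (Cf f)) :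
    Antitone (notRejectedF (W := W) Cf) := fun _ _ h =>
  sdiff_subset_sdiff subset_rfl (sdiff_chooseF_mono hfs h)

theorem antitone_notRejectedW (hws : ∀ w, Substitutable (Cw w)) :
    Antitone (notRejectedW (F := F) Cw) := fun _ _ h =>
  sdiff_subset_sdiff subset_rfl (sdiff_chooseW_mono hws h)

variable (Cf Cw) in
def fleinerMap (hfs : ∀ f, Substitutable (Cf f)) (hws : ∀ w, Substitutable (Cw w)) :
    Finset (F × W) →o Finset (F × W) where
  toFun A := notRejectedW Cw (notRejectedF Cf A)
  monotone' := (antitone_notRejectedW hws).comp (antitone_notRejectedF hfs)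

theorem inter_notRejectedF (A : Finset (F × W)) : A ∩ notRejectedF Cf A = chooseF Cf A := by
  ext q
  grind [notRejectedF, chooseF]

theorem inter_notRejectedW (B : Finset (F × W)) : B ∩ notRejectedW Cw B = chooseW Cw B := by
  ext q
  grind [notRejectedW, chooseW]

theorem chooseF_eq_chooseW_of_isFixedPt {A : Finset (F × W)}
    (hA : notRejectedW Cw (notRejectedF Cf A) = A) :
    chooseF Cf A = chooseW Cw (notRejectedF Cf A) := by
  rw [← inter_notRejectedF, ← inter_notRejectedW, hA, inter_comm]

theorem isStable_chooseF (hfsub : ∀ f S, Cf f S ⊆ S) (hwsub : ∀ w S, Cw w S ⊆ S)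
    (hfc : ∀ f, Consistent (Cf f)) (hwc : ∀ w, Consistent (Cw w)) {A : Finset (F × W)}
    (hA : notRejectedW Cw (notRejectedF Cf A) = A) : IsStable Cf Cw (chooseF Cf A) := by
  set B := notRejectedF Cf A
  have hμW (f : F) : matchedW (chooseF Cf A) f = Cf f (matchedW A f) := matchedW_chooseF hfsub A f
  have hμF (w : W) : matchedF (chooseF Cf A) w = Cw w (matchedF B w) := by
    rw [chooseF_eq_chooseW_of_isFixedPt hA]
    exact matchedF_chooseW hwsub B w
  refine ⟨fun f => ?_, fun w => ?_, fun f w hfw ⟨hf, hw⟩ => ?_⟩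
  · rw [hμW]
    exact (hfc f).choice_idem (hfsub f) _
  · rw [hμF]
    exact (hwc w).choice_idem (hwsub w) _
  · have hcover : (f, w) ∈ A ∨ (f, w) ∈ B := by
      rw [← hA]
      grind [notRejectedW]
    rcases hcover with hA' | hB
    · rw [hμW] at hw
      exact (hfc f).notMem_insert_choice (hfsub f) (mem_matchedW.2 hA')
        (by rwa [← hμW, mem_matchedW]) hw
    · rw [hμF] at hf
      exact (hwc w).notMem_insert_choice (hwsub w) (mem_matchedF.2 hB)
        (by rwa [← hμF, mem_matchedF]) hf

variable (Cf) in
def firmOptions (μ : Finset (F × W)) : Finset (F × W) :=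
  univ.filter fun q => q ∈ μ ∨ q.2 ∉ Cf q.1 (insert q.2 (matchedW μ q.1))

variable (Cf) in
def workerOptions (μ : Finset (F × W)) : Finset (F × W) :=
  univ.filter fun q => q ∈ μ ∨ q.2 ∈ Cf q.1 (insert q.2 (matchedW μ q.1))

theorem mem_firmOptions {μ : Finset (F × W)} {f : F} {w : W} :
    (f, w) ∈ firmOptions Cf μ ↔ (f, w) ∈ μ ∨ w ∉ Cf f (insert w (matchedW μ f)) := by
  simp [firmOptions]

theorem mem_workerOptions {μ : Finset (F × W)} {f : F} {w : W} :
    (f, w) ∈ workerOptions Cf μ ↔ (f, w) ∈ μ ∨ w ∈ Cf f (insert w (matchedW μ f)) := by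
  simp [workerOptions]

theorem chooseF_firmOptions (hfsub : ∀ f S, Cf f S ⊆ S) (hfs : ∀ f, Substitutable (Cf f))
    (hfc : ∀ f, Consistent (Cf f)) {μ : Finset (F × W)}
    (hμ : ∀ f, Cf f (matchedW μ f) = matchedW μ f) : chooseF Cf (firmOptions Cf μ) = μ := by
  have hchoice (f : F) : Cf f (matchedW (firmOptions Cf μ) f) = matchedW μ f :=
    choice_eq_of_forall_notMem_insert (hfsub f) (hfs f) (hfc f)
      (fun w hw => mem_matchedW.2 (mem_firmOptions.2 (Or.inl (mem_matchedW.1 hw)))) (hμ f)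
      (fun w hw hwμ =>
        (mem_firmOptions.1 (mem_matchedW.1 hw)).resolve_left (mt mem_matchedW.2 hwμ))
  ext ⟨f, w⟩
  rw [mem_chooseF, hchoice, mem_matchedW,
    and_iff_right_of_imp fun h => mem_firmOptions.2 (Or.inl h)]

theorem chooseW_workerOptions (hwsub : ∀ w S, Cw w S ⊆ S) (hws : ∀ w, Substitutable (Cw w))
    (hwc : ∀ w, Consistent (Cw w)) {μ : Finset (F × W)} (hμ : IsStable Cf Cw μ) :
    chooseW Cw (workerOptions Cf μ) = μ := by
  have hchoice (w : W) : Cw w (matchedF (workerOptions Cf μ) w) = matchedF μ w :=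
    choice_eq_of_forall_notMem_insert (hwsub w) (hws w) (hwc w)
      (fun f hf => mem_matchedF.2 (mem_workerOptions.2 (Or.inl (mem_matchedF.1 hf)))) (hμ.2.1 w)
      (fun f hf hfμ hblock => hμ.2.2 f w (mt mem_matchedF.2 hfμ)
        ⟨hblock, (mem_workerOptions.1 (mem_matchedF.1 hf)).resolve_left (mt mem_matchedF.2 hfμ)⟩)
  ext ⟨f, w⟩
  rw [mem_chooseW, hchoice, mem_matchedF,
    and_iff_right_of_imp fun h => mem_workerOptions.2 (Or.inl h)]

theorem notRejectedF_firmOptions (hfsub : ∀ f S, Cf f S ⊆ S) (hfs : ∀ f, Substitutable (Cf f))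
    (hfc : ∀ f, Consistent (Cf f)) {μ : Finset (F × W)}
    (hμ : ∀ f, Cf f (matchedW μ f) = matchedW μ f) :
    notRejectedF Cf (firmOptions Cf μ) = workerOptions Cf μ := by
  ext ⟨f, w⟩
  rw [notRejectedF, chooseF_firmOptions hfsub hfs hfc hμ, mem_sdiff, mem_sdiff, mem_firmOptions,
    mem_workerOptions]
  simp only [mem_univ, true_and]
  tauto

theorem notRejectedW_workerOptions (hwsub : ∀ w S, Cw w S ⊆ S) (hws : ∀ w, Substitutable (Cw w))
    (hwc : ∀ w, Consistent (Cw w)) {μ : Finset (F × W)} (hμ : IsStable Cf Cw μ) :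
    notRejectedW Cw (workerOptions Cf μ) = firmOptions Cf μ := by
  ext ⟨f, w⟩
  rw [notRejectedW, chooseW_workerOptions hwsub hws hwc hμ, mem_sdiff, mem_sdiff, mem_firmOptions,
    mem_workerOptions]
  simp only [mem_univ, true_and]
  tauto

theorem firmOptions_subset_of_firmGE (hfsub : ∀ f S, Cf f S ⊆ S) (hfs : ∀ f, Substitutable (Cf f))
    (hfc : ∀ f, Consistent (Cf f)) {μ μ' : Finset (F × W)} (hge : FirmGE Cf μ μ') :
    firmOptions Cf μ' ⊆ firmOptions Cf μ := by
  rintro ⟨f, w⟩ hw'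
  rw [mem_firmOptions] at hw' ⊢
  by_contra! hw
  have hunion : w ∈ Cf f (insert w (matchedW μ f ∪ matchedW μ' f)) := by
    rw [insert_eq, ← choice_union_choice (hfsub f) (hfs f) (hfc f), hge f, ← insert_eq]
    exact hw.2
  rcases hw' with hμ' | hrej
  · rw [insert_eq_of_mem (mem_union_right _ (mem_matchedW.2 hμ')), hge f] at hunion
    exact hw.1 (mem_matchedW.1 hunion)
  · exact hrej (hfs f _ _ w (subset_union_right.trans (subset_insert _ _)) hunion)

theorem isFixedPt_firmOptions (hfsub : ∀ f S, Cf f S ⊆ S) (hwsub : ∀ w S, Cw w S ⊆ S)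
    (hfs : ∀ f, Substitutable (Cf f)) (hfc : ∀ f, Consistent (Cf f))
    (hws : ∀ w, Substitutable (Cw w)) (hwc : ∀ w, Consistent (Cw w)) {μ : Finset (F × W)}
    (hμ : IsStable Cf Cw μ) :
    notRejectedW Cw (notRejectedF Cf (firmOptions Cf μ)) = firmOptions Cf μ := by
  rw [notRejectedF_firmOptions hfsub hfs hfc hμ.1, notRejectedW_workerOptions hwsub hws hwc hμ]

end FixedPoints

attribute [local instance] Fintype.toCompleteLattice

theorem isOrderRetract_isStable {F W : Type*} [Fintype F] [Fintype W] [DecidableEq F]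
    [DecidableEq W] {Cf : F → Finset W → Finset W} {Cw : W → Finset F → Finset F}
    (hfsub : ∀ f S, Cf f S ⊆ S) (hwsub : ∀ w S, Cw w S ⊆ S)
    (hfs : ∀ f, Substitutable (Cf f)) (hfc : ∀ f, Consistent (Cf f))
    (hws : ∀ w, Substitutable (Cw w)) (hwc : ∀ w, Consistent (Cw w)) :
    IsOrderRetract (IsStable Cf Cw) (FirmGE Cf)
      (fun μ => (⟨firmOptions Cf μ, isFixedPt_firmOptions hfsub hwsub hfs hfc hws hwc μ.2⟩ :
        Function.fixedPoints (fleinerMap Cf Cw hfs hws)))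
      (fun A => chooseF Cf A) where
  retract_mem A := isStable_chooseF hfsub hwsub hfc hwc A.2
  retract_section μ := chooseF_firmOptions hfsub hfs hfc μ.2.1
  section_mono _ _ := firmOptions_subset_of_firmGE hfsub hfs hfc
  retract_mono := firmGE_chooseF_of_subset hfsub hfc

/-- **The stable matching lattice (Blair).** In a matching market with substitutable
and consistent choice functions: stable matchings exist, the firm order `⪰` is a
partial order on them, any two stable matchings have a least upper bound and a
greatest lower bound, and firm-optimal and worker-optimal stable matchings exist. -/
theorem stable_matching_lattice
    {F W : Type*} [Fintype F] [Fintype W] [DecidableEq F] [DecidableEq W]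
    (Cf : F → Finset W → Finset W) (Cw : W → Finset F → Finset F)
    (hfsub : ∀ f S, Cf f S ⊆ S) (hwsub : ∀ w S, Cw w S ⊆ S)
    (hfs : ∀ f, Substitutable (Cf f)) (hfc : ∀ f, Consistent (Cf f))
    (hws : ∀ w, Substitutable (Cw w)) (hwc : ∀ w, Consistent (Cw w)) :
    (∃ μ, IsStable Cf Cw μ) ∧
    (∀ μ, IsStable Cf Cw μ → FirmGE Cf μ μ) ∧
    (∀ μ μ', IsStable Cf Cw μ → IsStable Cf Cw μ' →
      FirmGE Cf μ μ' → FirmGE Cf μ' μ → μ = μ') ∧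
    (∀ μ₁ μ₂ μ₃, IsStable Cf Cw μ₁ → IsStable Cf Cw μ₂ → IsStable Cf Cw μ₃ →
      FirmGE Cf μ₁ μ₂ → FirmGE Cf μ₂ μ₃ → FirmGE Cf μ₁ μ₃) ∧
    (∀ μ μ', IsStable Cf Cw μ → IsStable Cf Cw μ' →
      (∃ ν, IsStable Cf Cw ν ∧ FirmGE Cf ν μ ∧ FirmGE Cf ν μ' ∧
        ∀ l, IsStable Cf Cw l → FirmGE Cf l μ → FirmGE Cf l μ' → FirmGE Cf l ν) ∧
      (∃ ν, IsStable Cf Cw ν ∧ FirmGE Cf μ ν ∧ FirmGE Cf μ' ν ∧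
        ∀ l, IsStable Cf Cw l → FirmGE Cf μ l → FirmGE Cf μ' l → FirmGE Cf ν l)) ∧
    (∃ μF, IsStable Cf Cw μF ∧ ∀ μ, IsStable Cf Cw μ → FirmGE Cf μF μ) ∧
    (∃ μW, IsStable Cf Cw μW ∧ ∀ μ, IsStable Cf Cw μ → FirmGE Cf μ μW) := by
  have h := isOrderRetract_isStable hfsub hwsub hfs hfc hws hwc
  exact ⟨h.exists_greatest.imp fun _ => And.left, fun _ => h.refl, fun _ _ => h.antisymm,
    fun _ _ _ => h.trans, fun _ _ hμ hμ' => ⟨h.exists_lub hμ hμ', h.exists_glb hμ hμ'⟩,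
    h.exists_greatest, h.exists_least⟩
end

section
/- For every nonempty finite distributive lattice L, there exists a one-to-one matching market instance I = (F, W, (C_f)_{f∈F}, (C_w)_{w∈W}) in which every choice function is substitutable and consistent and satisfies |C_a(T)| ≤ 1 for every agent a and every set T, together with a bijection θ from L onto the set S of stable matchings of I, such that for all x, y ∈ L: x ≤ y in L if and only if C_f(θ(y)(f) ∪ θ(x)(f)) = θ(y)(f) for every firm f ∈ F. That is, every finite distributive lattice is order-isomorphic to the stable matching lattice of a one-to-one matching market. -/
open Finset

namespace SML
attribute [local instance] Classical.propDecidable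

noncomputable def pick {α : Type} (Acc : α → Prop) (ρ : α → ℕ) (S : Finset α) : Finset α :=
  S.filter fun x => Acc x ∧ ∀ y ∈ S, Acc y → ρ x ≤ ρ y

section picklemmas
variable {α : Type} {Acc : α → Prop} {ρ : α → ℕ} {S T : Finset α} {a b : α}

lemma mem_pick : a ∈ pick Acc ρ S ↔ a ∈ S ∧ Acc a ∧ ∀ y ∈ S, Acc y → ρ a ≤ ρ y := by
  simp [pick, and_assoc]

lemma pick_subset : pick Acc ρ S ⊆ S := filter_subset _ _

lemma pick_card_le (hρ : Function.Injective ρ) : (pick Acc ρ S).card ≤ 1 := by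
  refine Finset.card_le_one.2 fun x hx y hy => ?_
  rw [mem_pick] at hx hy
  exact hρ (le_antisymm (hx.2.2 y hy.1 hy.2.1) (hy.2.2 x hx.1 hx.2.1))

lemma pick_nonempty (h : ∃ x ∈ S, Acc x) : (pick Acc ρ S).Nonempty := by
  classical
  obtain ⟨x, hx, hax⟩ := h
  obtain ⟨m, hm, hmin⟩ := Finset.exists_min_image (S.filter fun z => Acc z) ρ
    ⟨x, by simp [hx, hax]⟩
  rw [mem_filter] at hm
  exact ⟨m, mem_pick.2 ⟨hm.1, hm.2, fun y hy hay => hmin y (by simp [hy, hay])⟩⟩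

lemma pick_substitutable [DecidableEq α] (hT : T ⊆ S) (ha : a ∈ pick Acc ρ S) :
    a ∈ pick Acc ρ (insert a T) := by
  rw [mem_pick] at ha ⊢
  refine ⟨mem_insert_self _ _, ha.2.1, fun y hy hay => ?_⟩
  rcases mem_insert.1 hy with rfl | hy
  · exact le_rfl
  · exact ha.2.2 y (hT hy) hay

lemma pick_consistent (hρ : Function.Injective ρ) (h1 : pick Acc ρ S ⊆ T) (h2 : T ⊆ S) :
    pick Acc ρ T = pick Acc ρ S := by
  by_cases hne : ∃ x ∈ S, Acc x
  · obtain ⟨m, hm⟩ := pick_nonempty (Acc := Acc) (ρ := ρ) hne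
    have hmT : m ∈ T := h1 hm
    rw [mem_pick] at hm
    ext x
    rw [mem_pick, mem_pick]
    constructor
    · rintro ⟨hxT, hax, hmin⟩
      have ha1 : ρ x ≤ ρ m := hmin m hmT hm.2.1
      have ha2 : ρ m ≤ ρ x := hm.2.2 x (h2 hxT) hax
      have : x = m := hρ (le_antisymm ha1 ha2)
      subst this
      exact ⟨h2 hxT, hax, hm.2.2⟩
    · rintro ⟨hxS, hax, hmin⟩
      have : x = m := hρ (le_antisymm (hmin m (h2 hmT) hm.2.1) (hm.2.2 x hxS hax))
      subst this
      exact ⟨hmT, hax, fun y hy hay => hmin y (h2 hy) hay⟩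
  · push_neg at hne
    have e1 : pick Acc ρ S = ∅ := by
      rw [eq_empty_iff_forall_notMem]
      intro x hx; rw [mem_pick] at hx; exact hne x hx.1 hx.2.1
    have e2 : pick Acc ρ T = ∅ := by
      rw [eq_empty_iff_forall_notMem]
      intro x hx; rw [mem_pick] at hx; exact hne x (h2 hx.1) hx.2.1
    rw [e1, e2]

lemma pick_singleton (ha : Acc a) : pick Acc ρ {a} = {a} := by
  ext x
  simp only [mem_pick, mem_singleton]
  constructor
  · rintro ⟨rfl, _⟩; rfl
  · rintro rfl; exact ⟨rfl, ha, by rintro y rfl _; exact le_rfl⟩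

lemma mem_pick_pair [DecidableEq α] : a ∈ pick Acc ρ (insert a {b}) ↔ Acc a ∧ (Acc b → ρ a ≤ ρ b) := by
  rw [mem_pick]
  constructor
  · rintro ⟨_, hax, h⟩
    exact ⟨hax, fun hb => h b (by simp) hb⟩
  · rintro ⟨hax, h⟩
    refine ⟨mem_insert_self _ _, hax, ?_⟩
    intro y hy hay
    rcases mem_insert.1 hy with rfl | hy
    · exact le_rfl
    · rw [mem_singleton] at hy; subst hy; exact h hay

lemma pick_pair_eq [DecidableEq α] (hρ : Function.Injective ρ) (ha : Acc a) (hb : Acc b) (hab : ρ a ≤ ρ b) :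
    pick Acc ρ ({a} ∪ {b}) = {a} := by
  ext x
  rw [mem_pick]
  simp only [mem_union, mem_singleton]
  constructor
  · rintro ⟨(rfl | rfl), hax, hmin⟩
    · rfl
    · have h1 : ρ x ≤ ρ a := hmin a (Or.inl rfl) ha
      exact hρ (le_antisymm h1 hab)
  · rintro rfl
    refine ⟨Or.inl rfl, ha, ?_⟩
    rintro y (rfl | rfl) hy
    · exact le_rfl
    · exact hab

end picklemmas

/-! ### The market -/

variable (n : ℕ) (R : Fin n → Fin n → Prop)

/-- Firms: `inl p` is firm `f_p`, `inr p` is firm `g_p`.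
    Workers: `inl p` is worker `a_p`, `inr p` is worker `b_p`. -/
abbrev Agent (n : ℕ) := Sum (Fin n) (Fin n)

def AccF : Agent n → Agent n → Prop
  | Sum.inl p, w => w = Sum.inl p ∨ w = Sum.inr p ∨ ∃ q, R p q ∧ w = Sum.inl q
  | Sum.inr p, w => w = Sum.inl p ∨ w = Sum.inr p

def AccW : Agent n → Agent n → Prop
  | Sum.inl p, f => f = Sum.inr p ∨ f = Sum.inl p ∨ ∃ q, R q p ∧ f = Sum.inl q
  | Sum.inr p, f => f = Sum.inl p ∨ f = Sum.inr p

def rhoF : Agent n → Agent n → ℕ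
  | Sum.inl p, Sum.inl q => if q = p then 0 else q.val + 1
  | Sum.inl _, Sum.inr q => n + 1 + q.val
  | Sum.inr _, Sum.inl q => n + q.val
  | Sum.inr _, Sum.inr q => q.val

def rhoW : Agent n → Agent n → ℕ
  | Sum.inl p, Sum.inl q => if q = p then 2 * n + 1 else q.val + 1
  | Sum.inl p, Sum.inr q => if q = p then 0 else 2 * n + 2 + q.val
  | Sum.inr _, Sum.inl q => q.val
  | Sum.inr _, Sum.inr q => n + q.val

lemma rhoF_inj (f : Agent n) : Function.Injective (rhoF n f) := by
  rcases f with p | p <;>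
    rintro (x | x) (y | y) h <;>
    simp only [rhoF] at h <;>
    have h1 : x.val < n := x.isLt <;>
    have h2 : y.val < n := y.isLt
  · split_ifs at h <;> (try subst_vars) <;> (try rfl) <;> (try omega) <;>
      exact congrArg Sum.inl (Fin.ext (by omega))
  · exfalso; split_ifs at h <;> omega
  · exfalso; split_ifs at h <;> omega
  · exact congrArg Sum.inr (Fin.ext (by omega))
  · exact congrArg Sum.inl (Fin.ext (by omega))
  · exfalso; omega
  · exfalso; omega
  · exact congrArg Sum.inr (Fin.ext (by omega))

lemma rhoW_inj (w : Agent n) : Function.Injective (rhoW n w) := by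
  rcases w with p | p <;>
    rintro (x | x) (y | y) h <;>
    simp only [rhoW] at h <;>
    have h1 : x.val < n := x.isLt <;>
    have h2 : y.val < n := y.isLt
  · split_ifs at h <;> (try subst_vars) <;> (try rfl) <;> (try omega) <;>
      exact congrArg Sum.inl (Fin.ext (by omega))
  · exfalso; split_ifs at h <;> omega
  · exfalso; split_ifs at h <;> omega
  · split_ifs at h <;> (try subst_vars) <;> (try rfl) <;> (try omega) <;>
      exact congrArg Sum.inr (Fin.ext (by omega))
  · exact congrArg Sum.inl (Fin.ext (by omega))
  · exfalso; omega
  · exfalso; omega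
  · exact congrArg Sum.inr (Fin.ext (by omega))

noncomputable def Cf' : Agent n → Finset (Agent n) → Finset (Agent n) :=
  fun f S => pick (AccF n R f) (rhoF n f) S

noncomputable def Cw' : Agent n → Finset (Agent n) → Finset (Agent n) :=
  fun w S => pick (AccW n R w) (rhoW n w) S

noncomputable def mmatch (s : Fin n → Prop) : Agent n → Agent n
  | Sum.inl p => if s p then Sum.inl p else Sum.inr p
  | Sum.inr p => if s p then Sum.inr p else Sum.inl p

noncomputable def theta (s : Fin n → Prop) : Finset (Agent n × Agent n) :=
  univ.image fun f => (f, mmatch n s f)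

variable {n}

lemma mmatch_invol (s : Fin n → Prop) (x : Agent n) : mmatch n s (mmatch n s x) = x := by
  rcases x with p | p <;> by_cases h : s p <;> simp [mmatch, h]

lemma mem_theta {s : Fin n → Prop} {φ ω : Agent n} :
    (φ, ω) ∈ theta n s ↔ ω = mmatch n s φ := by
  simp only [theta, mem_image, mem_univ, true_and, Prod.mk.injEq]
  constructor
  · rintro ⟨x, rfl, rfl⟩; rfl
  · rintro rfl; exact ⟨φ, rfl, rfl⟩

lemma mem_matchedW {F W : Type} [DecidableEq F] [DecidableEq W]
    {μ : Finset (F × W)} {f : F} {w : W} : w ∈ matchedW μ f ↔ (f, w) ∈ μ := by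
  simp only [matchedW, mem_image, mem_filter]
  constructor
  · rintro ⟨⟨pf, pw⟩, ⟨hmem, rfl⟩, rfl⟩; exact hmem
  · intro h; exact ⟨(f, w), ⟨h, rfl⟩, rfl⟩

lemma mem_matchedF {F W : Type} [DecidableEq F] [DecidableEq W]
    {μ : Finset (F × W)} {f : F} {w : W} : f ∈ matchedF μ w ↔ (f, w) ∈ μ := by
  simp only [matchedF, mem_image, mem_filter]
  constructor
  · rintro ⟨⟨pf, pw⟩, ⟨hmem, rfl⟩, rfl⟩; exact hmem
  · intro h; exact ⟨(f, w), ⟨h, rfl⟩, rfl⟩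

lemma matchedW_theta (s : Fin n → Prop) (f : Agent n) :
    matchedW (theta n s) f = {mmatch n s f} := by
  ext w
  rw [mem_matchedW, mem_theta, mem_singleton]

lemma matchedF_theta (s : Fin n → Prop) (w : Agent n) :
    matchedF (theta n s) w = {mmatch n s w} := by
  ext f
  rw [mem_matchedF, mem_theta, mem_singleton]
  constructor
  · rintro rfl; rw [mmatch_invol]
  · rintro rfl; rw [mmatch_invol]

variable {R : Fin n → Fin n → Prop}

lemma accF_partner (s : Fin n → Prop) (f : Agent n) : AccF n R f (mmatch n s f) := by
  rcases f with p | p <;> by_cases h : s p <;> simp [AccF, mmatch, h]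

lemma accW_partner (s : Fin n → Prop) (w : Agent n) : AccW n R w (mmatch n s w) := by
  rcases w with p | p <;> by_cases h : s p <;> simp [AccW, mmatch, h]

theorem theta_stable (hIrr : ∀ p, ¬ R p p) {s : Fin n → Prop}
    (hs : ∀ p q, R p q → s q → s p) :
    IsStable (Cf' n R) (Cw' n R) (theta n s) := by
  refine ⟨?_, ?_, ?_⟩
  · intro f
    rw [matchedW_theta, Cf', pick_singleton (accF_partner s f)]
  · intro w
    rw [matchedF_theta, Cw', pick_singleton (accW_partner s w)]
  · intro φ ω hnot hblock
    obtain ⟨hW, hF⟩ := hblock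
    rw [mem_theta] at hnot
    rw [Cw', matchedF_theta, mem_pick_pair] at hW
    rw [Cf', matchedW_theta, mem_pick_pair] at hF
    obtain ⟨hWacc, hWr⟩ := hW
    obtain ⟨hFacc, hFr⟩ := hF
    have hWr := hWr (accW_partner s ω)
    have hFr := hFr (accF_partner s φ)
    rcases φ with p | p <;> rcases ω with q | q
    · -- firm f_p, worker a_q
      rcases hFacc with h | h | ⟨q', hq', h⟩
      · -- pair (f_p, a_p)
        rw [Sum.inl.injEq] at h
        rcases h with rfl
        by_cases hp : s q
        · exact hnot (by simp [mmatch, hp])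
        · rw [show mmatch n s (Sum.inl q) = Sum.inr q by simp [mmatch, hp]] at hWr
          simp [rhoW] at hWr
      · exact absurd h (by simp)
      · rw [Sum.inl.injEq] at h
        rcases h with rfl
        have hpq : p ≠ q := fun h => hIrr p (h ▸ hq')
        by_cases hp : s p
        · rw [show mmatch n s (Sum.inl p) = Sum.inl p by simp [mmatch, hp]] at hFr
          simp [rhoF, hpq] at hFr
          exact hpq hFr.symm
        · by_cases hq : s q
          · exact hp (hs p q hq' hq)
          · rw [show mmatch n s (Sum.inl q) = Sum.inr q by simp [mmatch, hq]] at hWr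
            simp [rhoW, hpq] at hWr
    · -- firm f_p, worker b_q
      rcases hFacc with h | h | ⟨q', hq', h⟩
      · exact absurd h (by simp)
      · rw [Sum.inr.injEq] at h
        rcases h with rfl
        by_cases hp : s q
        · rw [show mmatch n s (Sum.inl q) = Sum.inl q by simp [mmatch, hp]] at hFr
          simp [rhoF] at hFr
        · exact hnot (by simp [mmatch, hp])
      · exact absurd h (by simp)
    · -- firm g_p, worker a_q
      rcases hWacc with h | h | ⟨q', hq', h⟩
      · rw [Sum.inr.injEq] at h
        rcases h with rfl
        by_cases hp : s p
        · rw [show mmatch n s (Sum.inr p) = Sum.inr p by simp [mmatch, hp]] at hFr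
          simp [rhoF] at hFr
          have := p.isLt
          omega
        · exact hnot (by simp [mmatch, hp])
      · exact absurd h (by simp)
      · exact absurd h (by simp)
    · -- firm g_p, worker b_q
      rcases hFacc with h | h
      · exact absurd h (by simp)
      · rw [Sum.inr.injEq] at h
        rcases h with rfl
        by_cases hp : s q
        · exact hnot (by simp [mmatch, hp])
        · rw [show mmatch n s (Sum.inr q) = Sum.inl q by simp [mmatch, hp]] at hWr
          simp [rhoW] at hWr
          have := q.isLt
          omega

lemma firmGE_iff {s t : Fin n → Prop} :
    FirmGE (Cf' n R) (theta n t) (theta n s) ↔ ∀ p, s p → t p := by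
  constructor
  · intro h p hsp
    by_contra htp
    have := h (Sum.inl p)
    rw [matchedW_theta, matchedW_theta,
      show mmatch n t (Sum.inl p) = Sum.inr p by simp [mmatch, htp],
      show mmatch n s (Sum.inl p) = Sum.inl p by simp [mmatch, hsp],
      union_comm, Cf',
      pick_pair_eq (rhoF_inj n (Sum.inl p)) (by simp [AccF]) (by simp [AccF])
        (by simp [rhoF])] at this
    exact absurd (singleton_injective this).symm (by simp)
  · intro h f
    rw [matchedW_theta, matchedW_theta, Cf']
    rcases f with p | p <;> by_cases ht : t p
    · by_cases hsp : s p
      · rw [show mmatch n s (Sum.inl p) = mmatch n t (Sum.inl p) by simp [mmatch, ht, hsp],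
          union_idempotent]
        exact pick_singleton (accF_partner t _)
      · rw [show mmatch n t (Sum.inl p) = Sum.inl p by simp [mmatch, ht],
          show mmatch n s (Sum.inl p) = Sum.inr p by simp [mmatch, hsp]]
        exact pick_pair_eq (rhoF_inj n (Sum.inl p)) (by simp [AccF]) (by simp [AccF])
          (by simp [rhoF])
    · have hsp : ¬ s p := fun hsp => ht (h p hsp)
      rw [show mmatch n s (Sum.inl p) = mmatch n t (Sum.inl p) by simp [mmatch, ht, hsp],
        union_idempotent]
      exact pick_singleton (accF_partner t _)
    · by_cases hsp : s p
      · rw [show mmatch n s (Sum.inr p) = mmatch n t (Sum.inr p) by simp [mmatch, ht, hsp],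
          union_idempotent]
        exact pick_singleton (accF_partner t _)
      · rw [show mmatch n t (Sum.inr p) = Sum.inr p by simp [mmatch, ht],
          show mmatch n s (Sum.inr p) = Sum.inl p by simp [mmatch, hsp]]
        exact pick_pair_eq (rhoF_inj n (Sum.inr p)) (by simp [AccF]) (by simp [AccF])
          (by simp [rhoF])
    · have hsp : ¬ s p := fun hsp => ht (h p hsp)
      rw [show mmatch n s (Sum.inr p) = mmatch n t (Sum.inr p) by simp [mmatch, ht, hsp],
        union_idempotent]
      exact pick_singleton (accF_partner t _)

/-! ### Surjectivity: every stable matching has the form `theta` -/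

section Surj

variable {μ : Finset (Agent n × Agent n)}

lemma matchedW_card (hst : IsStable (Cf' n R) (Cw' n R) μ) (f : Agent n) :
    (matchedW μ f).card ≤ 1 := by
  rw [← hst.1 f]; exact pick_card_le (rhoF_inj n f)

lemma matchedF_card (hst : IsStable (Cf' n R) (Cw' n R) μ) (w : Agent n) :
    (matchedF μ w).card ≤ 1 := by
  rw [← hst.2.1 w]; exact pick_card_le (rhoW_inj n w)

lemma pair_uniqueW (hst : IsStable (Cf' n R) (Cw' n R) μ) {f w w'}
    (h1 : (f, w) ∈ μ) (h2 : (f, w') ∈ μ) : w = w' :=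
  Finset.card_le_one.1 (matchedW_card hst f) _ (mem_matchedW.2 h1) _ (mem_matchedW.2 h2)

lemma pair_uniqueF (hst : IsStable (Cf' n R) (Cw' n R) μ) {f f' w}
    (h1 : (f, w) ∈ μ) (h2 : (f', w) ∈ μ) : f = f' :=
  Finset.card_le_one.1 (matchedF_card hst w) _ (mem_matchedF.2 h1) _ (mem_matchedF.2 h2)

lemma matchedW_eq_singleton (hst : IsStable (Cf' n R) (Cw' n R) μ) {f w}
    (h : (f, w) ∈ μ) : matchedW μ f = {w} :=
  Finset.eq_singleton_iff_unique_mem.2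
    ⟨mem_matchedW.2 h, fun w' hw' => (pair_uniqueW hst (mem_matchedW.1 hw') h)⟩

lemma matchedF_eq_singleton (hst : IsStable (Cf' n R) (Cw' n R) μ) {f w}
    (h : (f, w) ∈ μ) : matchedF μ w = {f} :=
  Finset.eq_singleton_iff_unique_mem.2
    ⟨mem_matchedF.2 h, fun f' hf' => (pair_uniqueF hst (mem_matchedF.1 hf') h)⟩

lemma mem_accF (hst : IsStable (Cf' n R) (Cw' n R) μ) {f w}
    (h : (f, w) ∈ μ) : AccF n R f w := by
  have : w ∈ matchedW μ f := mem_matchedW.2 h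
  rw [← hst.1 f] at this
  exact (mem_pick.1 this).2.1

lemma mem_accW (hst : IsStable (Cf' n R) (Cw' n R) μ) {f w}
    (h : (f, w) ∈ μ) : AccW n R w f := by
  have : f ∈ matchedF μ w := mem_matchedF.2 h
  rw [← hst.2.1 w] at this
  exact (mem_pick.1 this).2.1

/-- Firm `g_p` is always matched, to `a_p` or to `b_p`. -/
lemma gmatched (hst : IsStable (Cf' n R) (Cw' n R) μ) (p : Fin n) :
    (Sum.inr p, Sum.inl p) ∈ μ ∨ (Sum.inr p, Sum.inr p) ∈ μ := by
  by_contra hcon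
  push_neg at hcon
  obtain ⟨h1, h2⟩ := hcon
  have hempty : matchedW μ (Sum.inr p) = ∅ := by
    rw [eq_empty_iff_forall_notMem]
    intro w hw
    have hm := mem_matchedW.1 hw
    rcases mem_accF hst hm with h | h
    · exact h1 (h ▸ hm)
    · exact h2 (h ▸ hm)
  refine hst.2.2 (Sum.inr p) (Sum.inl p) h1 ⟨?_, ?_⟩
  · -- worker a_p wants g_p (her top choice)
    simp only [Cw']
    refine mem_pick.2 ⟨mem_insert_self _ _, by simp [AccW], ?_⟩
    intro y _ _
    simp [rhoW]
  · -- firm g_p, unmatched, wants a_p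
    simp only [Cf']
    rw [hempty]
    refine mem_pick.2 ⟨mem_insert_self _ _, by simp [AccF], ?_⟩
    intro y hy _
    rcases mem_insert.1 hy with rfl | hy
    · exact le_rfl
    · exact absurd hy (notMem_empty _)

/-- No firm `f_q` is ever matched to a worker `a_p` with `R q p`. -/
lemma noCross (hirr : ∀ p, ¬ R p p) (hWF : WellFounded R)
    (hst : IsStable (Cf' n R) (Cw' n R) μ) :
    ∀ p q, R q p → (Sum.inl q, Sum.inl p) ∉ μ := by
  intro p
  induction p using hWF.induction with
  | _ p IH =>
  intro q hqp hmem
  rcases gmatched hst q with hga | hgb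
  · -- g_q matched to a_q; then b_q is unmatched and (g_q, b_q) blocks
    have h1 : (Sum.inl q, Sum.inr q) ∉ μ := fun hm => by
      have := pair_uniqueW hst hmem hm; simp at this
    have h2 : (Sum.inr q, Sum.inr q) ∉ μ := fun hm => by
      have := pair_uniqueW hst hga hm; simp at this
    have hempty : matchedF μ (Sum.inr q) = ∅ := by
      rw [eq_empty_iff_forall_notMem]
      intro f hf
      have hm := mem_matchedF.1 hf
      rcases mem_accW hst hm with h | h
      · exact h1 (h ▸ hm)
      · exact h2 (h ▸ hm)
    refine hst.2.2 (Sum.inr q) (Sum.inr q) h2 ⟨?_, ?_⟩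
    · simp only [Cw']
      rw [hempty]
      refine mem_pick.2 ⟨mem_insert_self _ _, by simp [AccW], ?_⟩
      intro y hy _
      rcases mem_insert.1 hy with rfl | hy
      · exact le_rfl
      · exact absurd hy (notMem_empty _)
    · simp only [Cf']
      rw [matchedW_eq_singleton hst hga, mem_pick_pair]
      refine ⟨by simp [AccF], fun _ => ?_⟩
      simp [rhoF]
  · -- g_q matched to b_q; then (f_q, a_q) blocks
    have h3 : (Sum.inl q, Sum.inl q) ∉ μ := fun hm => by
      have := pair_uniqueW hst hmem hm
      rw [Sum.inl.injEq] at this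
      exact hirr q (this ▸ hqp)
    have hempty : matchedF μ (Sum.inl q) = ∅ := by
      rw [eq_empty_iff_forall_notMem]
      intro f hf
      have hm := mem_matchedF.1 hf
      rcases mem_accW hst hm with h | h | ⟨r, hr, h⟩
      · subst h
        have := pair_uniqueW hst hgb hm; simp at this
      · exact h3 (h ▸ hm)
      · subst h
        exact IH q hqp r hr hm
    refine hst.2.2 (Sum.inl q) (Sum.inl q) h3 ⟨?_, ?_⟩
    · simp only [Cw']
      rw [hempty]
      refine mem_pick.2 ⟨mem_insert_self _ _, by simp [AccW], ?_⟩
      intro y hy _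
      rcases mem_insert.1 hy with rfl | hy
      · exact le_rfl
      · exact absurd hy (notMem_empty _)
    · simp only [Cf']
      rw [matchedW_eq_singleton hst hmem, mem_pick_pair]
      refine ⟨by simp [AccF], fun _ => ?_⟩
      simp [rhoF]

/-- Each gadget is in one of its two internal states. -/
lemma states (hirr : ∀ p, ¬ R p p) (hWF : WellFounded R)
    (hst : IsStable (Cf' n R) (Cw' n R) μ) (p : Fin n) :
    ((Sum.inl p, Sum.inl p) ∈ μ ∧ (Sum.inr p, Sum.inr p) ∈ μ) ∨
    ((Sum.inl p, Sum.inr p) ∈ μ ∧ (Sum.inr p, Sum.inl p) ∈ μ) := by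
  rcases gmatched hst p with hga | hgb
  · -- g_p matched to a_p : state 0, show f_p matched to b_p
    right
    refine ⟨?_, hga⟩
    by_contra hne
    have h2 : (Sum.inr p, Sum.inr p) ∉ μ := fun hm => by
      have := pair_uniqueW hst hga hm; simp at this
    have hempty : matchedF μ (Sum.inr p) = ∅ := by
      rw [eq_empty_iff_forall_notMem]
      intro f hf
      have hm := mem_matchedF.1 hf
      rcases mem_accW hst hm with h | h
      · exact hne (h ▸ hm)
      · exact h2 (h ▸ hm)
    refine hst.2.2 (Sum.inr p) (Sum.inr p) h2 ⟨?_, ?_⟩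
    · simp only [Cw']
      rw [hempty]
      refine mem_pick.2 ⟨mem_insert_self _ _, by simp [AccW], ?_⟩
      intro y hy _
      rcases mem_insert.1 hy with rfl | hy
      · exact le_rfl
      · exact absurd hy (notMem_empty _)
    · simp only [Cf']
      rw [matchedW_eq_singleton hst hga, mem_pick_pair]
      refine ⟨by simp [AccF], fun _ => ?_⟩
      simp [rhoF]
  · -- g_p matched to b_p : state 1, show f_p matched to a_p
    left
    refine ⟨?_, hgb⟩
    by_contra hne
    have hempty : matchedF μ (Sum.inl p) = ∅ := by
      rw [eq_empty_iff_forall_notMem]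
      intro f hf
      have hm := mem_matchedF.1 hf
      rcases mem_accW hst hm with h | h | ⟨r, hr, h⟩
      · subst h
        have := pair_uniqueW hst hgb hm; simp at this
      · exact hne (h ▸ hm)
      · subst h
        exact noCross hirr hWF hst p r hr hm
    refine hst.2.2 (Sum.inl p) (Sum.inl p) hne ⟨?_, ?_⟩
    · simp only [Cw']
      rw [hempty]
      refine mem_pick.2 ⟨mem_insert_self _ _, by simp [AccW], ?_⟩
      intro y hy _
      rcases mem_insert.1 hy with rfl | hy
      · exact le_rfl
      · exact absurd hy (notMem_empty _)
    · simp only [Cf']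
      refine mem_pick.2 ⟨mem_insert_self _ _, by simp [AccF], ?_⟩
      intro y _ _
      simp [rhoF]

/-- The state function of a stable matching is a downset. -/
lemma state_downset (hirr : ∀ p, ¬ R p p) (hWF : WellFounded R)
    (hst : IsStable (Cf' n R) (Cw' n R) μ) {p q : Fin n} (hpq : R p q)
    (hq : (Sum.inl q, Sum.inl q) ∈ μ) : (Sum.inl p, Sum.inl p) ∈ μ := by
  by_contra hp
  have hpq' : p ≠ q := fun h => hirr p (h ▸ hpq)
  rcases states hirr hWF hst p with ⟨h1, _⟩ | ⟨hfb, hga⟩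
  · exact hp h1
  -- f_p is matched to b_p, a_q is matched to f_q; (f_p, a_q) blocks
  have hnm : (Sum.inl p, Sum.inl q) ∉ μ := fun hm => by
    have := pair_uniqueW hst hfb hm; simp [hpq'] at this
  refine hst.2.2 (Sum.inl p) (Sum.inl q) hnm ⟨?_, ?_⟩
  · simp only [Cw']
    rw [matchedF_eq_singleton hst hq, mem_pick_pair]
    have haccw : AccW n R (Sum.inl q) (Sum.inl p) := Or.inr (Or.inr ⟨p, hpq, rfl⟩)
    refine ⟨haccw, fun _ => ?_⟩
    have h1 : p.val < n := p.isLt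
    simp [rhoW, hpq']
    omega
  · simp only [Cf']
    rw [matchedW_eq_singleton hst hfb, mem_pick_pair]
    have haccf : AccF n R (Sum.inl p) (Sum.inl q) := Or.inr (Or.inr ⟨q, hpq, rfl⟩)
    refine ⟨haccf, fun _ => ?_⟩
    have h1 : q.val < n := q.isLt
    simp [rhoF, hpq'.symm]
    omega

/-- Every stable matching equals `theta` of its state function. -/
lemma mu_eq_theta (hirr : ∀ p, ¬ R p p) (hWF : WellFounded R)
    (hst : IsStable (Cf' n R) (Cw' n R) μ) :
    μ = theta n (fun p => (Sum.inl p, Sum.inl p) ∈ μ) := by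
  set s : Fin n → Prop := fun p => (Sum.inl p, Sum.inl p) ∈ μ with hs
  have key : ∀ φ : Agent n, (φ, mmatch n s φ) ∈ μ := by
    intro φ
    rcases φ with p | p
    · by_cases hp : s p
      · rw [show mmatch n s (Sum.inl p) = Sum.inl p by simp [mmatch, hp]]
        exact hp
      · rw [show mmatch n s (Sum.inl p) = Sum.inr p by simp [mmatch, hp]]
        rcases states hirr hWF hst p with ⟨h1, _⟩ | ⟨h1, _⟩
        · exact absurd h1 hp
        · exact h1
    · by_cases hp : s p
      · rw [show mmatch n s (Sum.inr p) = Sum.inr p by simp [mmatch, hp]]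
        rcases states hirr hWF hst p with ⟨_, h2⟩ | ⟨h1, _⟩
        · exact h2
        · exact absurd (by have := pair_uniqueW hst hp h1; simp at this) not_false
      · rw [show mmatch n s (Sum.inr p) = Sum.inl p by simp [mmatch, hp]]
        rcases states hirr hWF hst p with ⟨h1, _⟩ | ⟨_, h2⟩
        · exact absurd h1 hp
        · exact h2
  ext ⟨φ, ω⟩
  rw [mem_theta]
  constructor
  · intro h
    exact pair_uniqueW hst h (key φ)
  · rintro rfl
    exact key φ

end Surj

end SML



open SML in
/-- **Every finite distributive lattice is the stable matching lattice of a
one-to-one matching market.** -/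
theorem every_finite_distributive_lattice_is_a_one_to_one_stable_matching_lattice
    (L : Type*) [DistribLattice L] [Fintype L] [Nonempty L] :
    ∃ I : MatchingMarket,
      (∀ f, Substitutable (I.Cf f)) ∧ (∀ f, Consistent (I.Cf f)) ∧
      (∀ w, Substitutable (I.Cw w)) ∧ (∀ w, Consistent (I.Cw w)) ∧
      (∀ f T, (I.Cf f T).card ≤ 1) ∧ (∀ w T, (I.Cw w T).card ≤ 1) ∧
      ∃ θ : L → Finset (I.F × I.W),
        (∀ x, IsStable I.Cf I.Cw (θ x)) ∧
        Function.Injective θ ∧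
        (∀ μ, IsStable I.Cf I.Cw μ → ∃ x, θ x = μ) ∧
        (∀ x y : L, x ≤ y ↔ FirmGE I.Cf (θ y) (θ x)) := by
  classical
  -- a finite nonempty lattice has a bottom element
  haveI : OrderBot L :=
    { bot := Finset.univ.inf' Finset.univ_nonempty id
      bot_le := fun a => Finset.inf'_le id (mem_univ a) }
  set P := {a : L // SupIrred a} with hP
  set n := Fintype.card P with hn
  set e : P ≃ Fin n := Fintype.equivFin P with he
  set r : Fin n → L := fun i => ((e.symm i : P) : L) with hr
  have hrirred : ∀ i, SupIrred (r i) := fun i => (e.symm i).2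
  have hrinj : Function.Injective r :=
    fun i j h => e.symm.injective (Subtype.coe_injective h)
  have hrsurj : ∀ a : L, SupIrred a → ∃ i, r i = a := by
    intro a ha
    refine ⟨e ⟨a, ha⟩, ?_⟩
    simp [hr]
  set R : Fin n → Fin n → Prop := fun i j => r i < r j with hR
  have hirr : ∀ p, ¬ R p p := fun p => lt_irrefl _
  have hWF : WellFounded R := InvImage.wf r (IsWellFounded.wf)
  -- every element is determined by the sup-irreducibles below it
  have key : ∀ x y : L, (∀ i, r i ≤ x → r i ≤ y) ↔ x ≤ y := by
    intro x y
    constructor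
    · intro h
      obtain ⟨s, rfl, hs⟩ := exists_supIrred_decomposition x
      refine Finset.sup_le fun b hb => ?_
      obtain ⟨i, rfl⟩ := hrsurj b (hs hb)
      exact h i (Finset.le_sup (f := id) hb)
    · intro h i hi
      exact hi.trans h
  refine ⟨{ F := Agent n
            W := Agent n
            Cf := Cf' n R
            Cw := Cw' n R
            Cf_subset := fun f S => pick_subset
            Cw_subset := fun w S => pick_subset }, ?_, ?_, ?_, ?_, ?_, ?_, ?_⟩
  · intro f S T a hT ha
    exact pick_substitutable hT ha
  · intro f S T h1 h2
    exact pick_consistent (rhoF_inj n f) h1 h2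
  · intro w S T a hT ha
    exact pick_substitutable hT ha
  · intro w S T h1 h2
    exact pick_consistent (rhoW_inj n w) h1 h2
  · intro f T
    exact pick_card_le (rhoF_inj n f)
  · intro w T
    exact pick_card_le (rhoW_inj n w)
  refine ⟨fun x => theta n (fun i => r i ≤ x), ?_, ?_, ?_, ?_⟩
  · -- stability
    intro x
    exact theta_stable hirr (fun p q hpq hq => (le_of_lt hpq).trans hq)
  · -- injectivity
    intro x y hxy
    have hxy' : theta n (fun i => r i ≤ x) = theta n (fun i => r i ≤ y) := hxy
    have h1 : FirmGE (Cf' n R) (theta n fun i => r i ≤ y) (theta n fun i => r i ≤ x) := by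
      rw [← hxy']
      exact firmGE_iff.2 fun p hp => hp
    have h2 : FirmGE (Cf' n R) (theta n fun i => r i ≤ x) (theta n fun i => r i ≤ y) := by
      rw [hxy']
      exact firmGE_iff.2 fun p hp => hp
    exact le_antisymm ((key x y).1 (firmGE_iff.1 h1)) ((key y x).1 (firmGE_iff.1 h2))
  · -- surjectivity
    intro μ hst
    set s : Fin n → Prop := fun p => (Sum.inl p, Sum.inl p) ∈ μ with hs
    have hdown : ∀ p q, R p q → s q → s p := fun p q hpq hq =>
      state_downset hirr hWF hst hpq hq
    set x : L := (univ.filter fun i => s i).sup r with hx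
    have hxiff : ∀ i, r i ≤ x ↔ s i := by
      intro i
      constructor
      · intro hi
        have hsp : SupPrime (r i) := supPrime_iff_supIrred.2 (hrirred i)
        obtain ⟨j, hj, hij⟩ := hsp.le_finset_sup.1 hi
        rw [mem_filter] at hj
        rcases eq_or_lt_of_le hij with heq | hlt
        · rw [hrinj heq]; exact hj.2
        · exact hdown i j hlt hj.2
      · intro hi
        exact Finset.le_sup (mem_filter.2 ⟨mem_univ _, hi⟩)
    refine ⟨x, ?_⟩
    show theta n (fun i => r i ≤ x) = μ
    have : (fun i => r i ≤ x) = s := funext fun i => propext (hxiff i)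
    rw [this]
    exact (mu_eq_theta hirr hWF hst).symm
  · -- order isomorphism
    intro x y
    show x ≤ y ↔ FirmGE (Cf' n R) (theta n fun i => r i ≤ y) (theta n fun i => r i ≤ x)
    rw [firmGE_iff]
    exact ((key x y).symm)
end
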